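/- arXiv:1712.05167 — 9 statements merged into one kernel-verified Lean document; each statement's English description precedes it below -/
import Mathlib

section
/- Let (Ω, F, P) be a probability space, Θ: Ω → Ω a measurable involution (Θ∘Θ = Id), and suppose the measure P̂ = P∘Θ is equivalent to P. Define σ = log(dP/dP̂) and e(α) = log ∫_Ω e^{−ασ} dP for α ∈ ℝ. Then e(α) = e(1−α) for all α ∈ ℝ. -/
open MeasureTheory Filter Topology
open scoped ENNReal

/-- **Symmetry of the Rényi entropic function.**
Let `(Ω, F, P)` be a probability space, `Θ : Ω → Ω` a measurable involution, and suppose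
`P̂ = P ∘ Θ` (the pushforward of `P` under `Θ`) is equivalent to `P`.  Define
`σ = log (dP/dP̂)` and `e(α) = log ∫ e^{-ασ} dP ∈ ]-∞, +∞]`.  Then `e(α) = e(1-α)` for all
`α ∈ ℝ`. -/
theorem renyi_symmetry {Ω : Type*} [MeasurableSpace Ω]
    (P : Measure Ω) [IsProbabilityMeasure P]
    (Θ : Ω → Ω) (hΘmeas : Measurable Θ) (hΘinv : Θ ∘ Θ = id)
    (hequiv : P.map Θ ≪ P ∧ P ≪ P.map Θ)
    (σ : Ω → ℝ) (hσ : σ = fun ω => Real.log ((P.rnDeriv (P.map Θ)) ω).toReal)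
    (e : ℝ → EReal)
    (he : ∀ α : ℝ,
      e α = ENNReal.log (∫⁻ ω, ENNReal.ofReal (Real.exp (-α * σ ω)) ∂P)) :
    ∀ α : ℝ, e α = e (1 - α) := by
  have hinv : ∀ ω, Θ (Θ ω) = ω := fun ω => congrFun hΘinv ω
  have hEemb : MeasurableEmbedding Θ := MeasurableEquiv.measurableEmbedding
    { toFun := Θ, invFun := Θ, left_inv := hinv, right_inv := hinv,
      measurable_toFun := hΘmeas, measurable_invFun := hΘmeas }
  have hmapmap : (P.map Θ).map Θ = P := by
    rw [Measure.map_map hΘmeas hΘmeas, hΘinv, Measure.map_id]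
  have : IsProbabilityMeasure (P.map Θ) := Measure.isProbabilityMeasure_map hΘmeas.aemeasurable
  have hfmeas : Measurable (P.rnDeriv (P.map Θ)) := Measure.measurable_rnDeriv _ _
  have hσmeas : Measurable σ := by
    rw [hσ]; exact (hfmeas.ennreal_toReal).log
  have hintmeas : ∀ β : ℝ, Measurable fun ω => ENNReal.ofReal (Real.exp (β * σ ω)) :=
    fun β => (measurable_const.mul hσmeas).exp.ennreal_ofReal
  have hfpos : ∀ᵐ ω ∂P, 0 < P.rnDeriv (P.map Θ) ω := Measure.rnDeriv_pos hequiv.2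
  have hflt : ∀ᵐ ω ∂P, P.rnDeriv (P.map Θ) ω < ∞ :=
    hequiv.2.ae_le (Measure.rnDeriv_lt_top P (P.map Θ))
  -- f ∘ Θ =ᵐ[P] f⁻¹
  have h1 : (fun ω => P.rnDeriv (P.map Θ) (Θ ω)) =ᵐ[P] (P.map Θ).rnDeriv P := by
    have := hEemb.rnDeriv_map (P.map Θ) P
    rw [hmapmap] at this
    exact this
  have h2 : (P.map Θ).rnDeriv P =ᵐ[P] (P.rnDeriv (P.map Θ))⁻¹ := by
    have h3 : ((P.map Θ).rnDeriv P)⁻¹ =ᵐ[P.map Θ] P.rnDeriv (P.map Θ) :=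
      Measure.inv_rnDeriv hequiv.1
    have h4 := hequiv.2.ae_le h3
    filter_upwards [h4] with ω hω
    simp [← hω]
  -- σ ∘ Θ = -σ a.e.
  have hσΘ : ∀ᵐ ω ∂P, σ (Θ ω) = -σ ω := by
    filter_upwards [h1.trans h2, hfpos, hflt] with ω hω h0 ht
    rw [hσ]
    simp only [hω, Pi.inv_apply]
    rw [ENNReal.toReal_inv, Real.log_inv]
  intro α
  rw [he α, he (1 - α)]
  congr 1
  have key : ∀ β : ℝ, (∫⁻ ω, ENNReal.ofReal (Real.exp (β * σ ω)) ∂(P.map Θ))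
      = ∫⁻ ω, ENNReal.ofReal (Real.exp (-β * σ ω)) ∂P := by
    intro β
    rw [lintegral_map (hintmeas β) hΘmeas]
    refine lintegral_congr_ae ?_
    filter_upwards [hσΘ] with ω hω
    rw [hω]; ring_nf
  calc ∫⁻ ω, ENNReal.ofReal (Real.exp (-α * σ ω)) ∂P
      = ∫⁻ ω, P.rnDeriv (P.map Θ) ω * ENNReal.ofReal (Real.exp (-α * σ ω)) ∂(P.map Θ) := by
        exact (MeasureTheory.lintegral_rnDeriv_mul hequiv.2
          (hintmeas (-α)).aemeasurable).symm
    _ = ∫⁻ ω, ENNReal.ofReal (Real.exp ((1 - α) * σ ω)) ∂(P.map Θ) := by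
        refine lintegral_congr_ae ?_
        filter_upwards [hequiv.1.ae_le hfpos, Measure.rnDeriv_lt_top P (P.map Θ)]
          with ω h0 ht
        have htR : 0 < (P.rnDeriv (P.map Θ) ω).toReal := ENNReal.toReal_pos h0.ne' ht.ne
        have hfe : P.rnDeriv (P.map Θ) ω = ENNReal.ofReal (Real.exp (σ ω)) := by
          rw [hσ]
          simp only []
          rw [Real.exp_log htR, ENNReal.ofReal_toReal ht.ne]
        rw [hfe, ← ENNReal.ofReal_mul (Real.exp_nonneg _), ← Real.exp_add]
        ring_nf
    _ = ∫⁻ ω, ENNReal.ofReal (Real.exp (-(1 - α) * σ ω)) ∂P := key (1 - α)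
end

section
/- Let (Ω, F, P) be a probability space, Θ: Ω → Ω a measurable involution, and suppose P̂ = P∘Θ is equivalent to P. Let σ = log(dP/dP̂) and let Q denote the law of σ under P (a Borel probability measure on ℝ). Let Q̂ be the image of Q under the reflection s ↦ −s. Then Q is absolutely continuous with respect to Q̂ and dQ/dQ̂(s) = e^s for Q̂-almost every s ∈ ℝ. -/
open MeasureTheory Filter Topology
open scoped ENNReal

lemma map_withDensity_comp {α β : Type*} [MeasurableSpace α] [MeasurableSpace β]
    (μ : Measure α) {f : α → β} (hf : Measurable f) {g : β → ℝ≥0∞} (hg : Measurable g) :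
    (μ.withDensity (g ∘ f)).map f = (μ.map f).withDensity g := by
  ext s hs
  rw [Measure.map_apply hf hs, withDensity_apply _ (hf hs), withDensity_apply _ hs,
    setLIntegral_map hs hg hf]
  rfl

/-- **Transient fluctuation relation.**
Let `(Ω, F, P)` be a probability space, `Θ` a measurable involution with `P̂ = P ∘ Θ`
equivalent to `P`, and `σ = log (dP/dP̂)`.  Let `Q` be the law of `σ` under `P` and `Q̂`
the image of `Q` under `s ↦ -s`.  Then `Q ≪ Q̂` and `dQ/dQ̂(s) = e^s` for `Q̂`-a.e. `s`. -/
theorem transient_fluctuation_relation {Ω : Type*} [MeasurableSpace Ω]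
    (P : Measure Ω) [IsProbabilityMeasure P]
    (Θ : Ω → Ω) (hΘmeas : Measurable Θ) (hΘinv : Θ ∘ Θ = id)
    (hequiv : P.map Θ ≪ P ∧ P ≪ P.map Θ)
    (σ : Ω → ℝ) (hσ : σ = fun ω => Real.log ((P.rnDeriv (P.map Θ)) ω).toReal)
    (Q : Measure ℝ) (hQ : Q = P.map σ)
    (Qhat : Measure ℝ) (hQhat : Qhat = Q.map (fun s => -s)) :
    Q ≪ Qhat ∧ Q.rnDeriv Qhat =ᵐ[Qhat] fun s => ENNReal.ofReal (Real.exp s) := by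
  set Phat := P.map Θ with hPhat
  have hPhatprob : IsProbabilityMeasure Phat := Measure.isProbabilityMeasure_map hΘmeas.aemeasurable
  have hPhatΘ : Phat.map Θ = P := by
    rw [hPhat, Measure.map_map hΘmeas hΘmeas, hΘinv, Measure.map_id]
  set f := P.rnDeriv Phat with hf
  have hfm : Measurable f := Measure.measurable_rnDeriv _ _
  have hPd : Phat.withDensity f = P := Measure.withDensity_rnDeriv_eq _ _ hequiv.2
  -- P̂ = P.withDensity (f ∘ Θ)
  have hPhatd : P.withDensity (f ∘ Θ) = Phat := by
    have h1 : (Phat.withDensity ((f ∘ Θ) ∘ Θ)).map Θ = (Phat.map Θ).withDensity (f ∘ Θ) :=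
      map_withDensity_comp Phat hΘmeas (hfm.comp hΘmeas)
    have h2 : (f ∘ Θ) ∘ Θ = f := by
      rw [Function.comp_assoc, hΘinv, Function.comp_id]
    rw [h2, hPd, hPhatΘ] at h1
    rw [← h1, hPhat]
  have hσmeas : Measurable σ := by
    rw [hσ]; exact (hfm.ennreal_toReal).log
  -- f ∘ Θ =ᵐ[P] f⁻¹
  have hinv : f ∘ Θ =ᵐ[P] f⁻¹ := by
    have h1 : f ∘ Θ =ᵐ[P] Phat.rnDeriv P := by
      rw [← hPhatd]
      exact (Measure.rnDeriv_withDensity P (hfm.comp hΘmeas)).symm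
    have h2 : (P.rnDeriv Phat)⁻¹ =ᵐ[P] Phat.rnDeriv P := Measure.inv_rnDeriv hequiv.2
    exact h1.trans h2.symm
  have hpos : ∀ᵐ ω ∂P, 0 < f ω := Measure.rnDeriv_pos hequiv.2
  have hlt : ∀ᵐ ω ∂P, f ω < ∞ := hequiv.2.ae_le (Measure.rnDeriv_lt_top P Phat)
  -- σ ∘ Θ =ᵐ[P] -σ
  have hσΘ : σ ∘ Θ =ᵐ[P] fun ω => -σ ω := by
    filter_upwards [hinv, hpos, hlt] with ω h1 h2 h3
    have : σ (Θ ω) = Real.log ((f (Θ ω)).toReal) := by rw [hσ]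
    rw [Function.comp_apply, this, show f (Θ ω) = (f ω)⁻¹ from h1,
      ENNReal.toReal_inv, Real.log_inv, hσ]
  -- Q̂ = P̂.map σ
  have hQhat' : Qhat = Phat.map σ := by
    rw [hQhat, hQ, Measure.map_map measurable_neg hσmeas]
    have : (fun s : ℝ => -s) ∘ σ = fun ω => -σ ω := rfl
    rw [this, ← Measure.map_congr hσΘ, ← Measure.map_map hσmeas hΘmeas, hPhat]
  set g : ℝ → ℝ≥0∞ := fun s => ENNReal.ofReal (Real.exp s) with hg
  have hgm : Measurable g := Real.measurable_exp.ennreal_ofReal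
  -- f =ᵐ[P̂] g ∘ σ
  have hfg : f =ᵐ[Phat] g ∘ σ := by
    filter_upwards [hequiv.1 hpos, hequiv.1 hlt] with ω h2 h3
    rw [Function.comp_apply, hg, hσ]
    simp only
    rw [Real.exp_log (ENNReal.toReal_pos h2.ne' h3.ne), ENNReal.ofReal_toReal h3.ne]
  -- Q = Q̂.withDensity g
  have key : Q = Qhat.withDensity g := by
    rw [hQ, ← hPd, withDensity_congr_ae hfg, map_withDensity_comp Phat hσmeas hgm, hQhat']
  have hQprob : IsProbabilityMeasure Q := by
    rw [hQ]; exact Measure.isProbabilityMeasure_map hσmeas.aemeasurable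
  have hQhatprob : IsProbabilityMeasure Qhat := by
    rw [hQhat]; exact Measure.isProbabilityMeasure_map measurable_neg.aemeasurable
  refine ⟨key ▸ withDensity_absolutelyContinuous _ _, ?_⟩
  rw [key]
  exact Measure.rnDeriv_withDensity Qhat hgm
end

section
/- For each n ∈ ℕ let (Ω_n, F_n, P_n) be a probability space with measurable involution Θ_n such that P̂_n = P_n∘Θ_n is equivalent to P_n, and set σ_n = log(dP_n/dP̂_n). Suppose there is a lower semicontinuous function I: ℝ → [0, +∞] such that for every Borel set Γ ⊂ ℝ: −inf_{s ∈ int(Γ)} I(s) ≤ liminf_n (1/n) log P_n{σ_n/n ∈ Γ} ≤ limsup_n (1/n) log P_n{σ_n/n ∈ Γ} ≤ −inf_{s ∈ cl(Γ)} I(s). Then I(−s) = I(s) + s for all s ∈ ℝ. -/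
/-!
Because `Θ` is an involution, transporting `dP/dP̂` along `Θ` gives `σ ∘ Θ = -σ` almost surely,
and the change of measure `P{σ ∈ -S} = ∫_{σ ∈ -S} e^σ dP̂ ≤ e^{-a} P̂{σ ∈ -S} = e^{-a} P{σ ∈ S}`
holds for every `S ⊆ [a, ∞)`. Taking `S = n Γ` with `Γ = (-s - ε, -s + ε)`, the LDP lower bound
on `-Γ ∋ s` and the upper bound on `cl Γ` give `-I(s) ≤ s + ε - inf_{cl Γ} I`.
Lower semicontinuity lets `ε → 0`, so `I(-s) ≤ I(s) + s`; the same bound at `-s` is the converse.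
-/

open MeasureTheory Filter Topology Set
open scoped ENNReal

theorem EReal.coe_inv_mul_log_le_of_le_ofReal_exp {t a : ℝ} (ht : 0 < t) {x y : ℝ≥0∞}
    (h : x ≤ ENNReal.ofReal (Real.exp (-(t * a))) * y) :
    ((t⁻¹ : ℝ) : EReal) * ENNReal.log x ≤
      ((-a : ℝ) : EReal) + ((t⁻¹ : ℝ) : EReal) * ENNReal.log y := by
  have hlog := ENNReal.log_monotone h
  rw [ENNReal.log_mul_add, ENNReal.log_ofReal_of_pos (Real.exp_pos _), Real.log_exp] at hlog
  have ht' : (0 : EReal) ≤ ((t⁻¹ : ℝ) : EReal) := EReal.coe_nonneg.2 (inv_nonneg.2 ht.le)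
  calc ((t⁻¹ : ℝ) : EReal) * ENNReal.log x
      ≤ ((t⁻¹ : ℝ) : EReal) * (((-(t * a) : ℝ) : EReal) + ENNReal.log y) :=
        mul_le_mul_of_nonneg_left hlog ht'
    _ = ((-a : ℝ) : EReal) + ((t⁻¹ : ℝ) : EReal) * ENNReal.log y := by
        rw [EReal.left_distrib_of_nonneg_of_ne_top ht' (EReal.coe_ne_top _), ← EReal.coe_mul]
        congr 2
        field_simp

theorem EReal.liminf_le_coe_add_liminf {α : Type*} {f : Filter α} [f.NeBot] {u v : α → EReal}
    {c : ℝ} (h : ∀ᶠ n in f, v n ≤ c + u n) : liminf v f ≤ c + liminf u f := by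
  have hc : limsup (fun _ ↦ (c : EReal)) f = c := limsup_const _
  calc liminf v f ≤ liminf ((fun _ ↦ (c : EReal)) + u) f := liminf_le_liminf h
    _ ≤ limsup (fun _ ↦ (c : EReal)) f + liminf u f :=
        EReal.liminf_add_le (.inl (hc.symm ▸ EReal.coe_ne_bot c))
          (.inl (hc.symm ▸ EReal.coe_ne_top c))
    _ = c + liminf u f := by rw [hc]

namespace MeasureTheory.Measure

variable {Ω : Type*} [MeasurableSpace Ω] {μ : Measure Ω} [SigmaFinite μ] {Θ : Ω → Ω}

/-- The paper's `σ`. The junk values `toReal ∞ = 0` and `log 0 = 0` only occur on a `μ`-null set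
when `μ ≪ μ.map Θ`. -/
noncomputable def entropyProduction (μ : Measure Ω) (Θ : Ω → Ω) (ω : Ω) : ℝ :=
  Real.log (μ.rnDeriv (μ.map Θ) ω).toReal

theorem rnDeriv_map_involutive_comp_ae_eq_inv (hΘ : Measurable Θ) (hinv : Function.Involutive Θ)
    (hμ : μ ≪ μ.map Θ) :
    (fun ω ↦ μ.rnDeriv (μ.map Θ) (Θ ω)) =ᵐ[μ] (μ.rnDeriv (μ.map Θ))⁻¹ := by
  let e := MeasurableEquiv.ofInvolutive Θ hinv hΘ
  have : SigmaFinite (μ.map Θ) := e.measurableEmbedding.sigmaFinite_map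
  -- `Θ` pushes `μ.map Θ` forward to `μ`, so it carries `d(μ.map Θ)/dμ` to `dμ/d(μ.map Θ) ∘ Θ`.
  have hmap : (μ.map Θ).map Θ = μ := by
    rw [Measure.map_map hΘ hΘ, hinv.comp_self, Measure.map_id]
  have h := e.measurableEmbedding.rnDeriv_map (μ.map Θ) μ
  rw [show ⇑e = Θ from rfl, hmap] at h
  exact h.trans (Measure.inv_rnDeriv hμ).symm

theorem entropyProduction_comp_ae_eq_neg (hΘ : Measurable Θ) (hinv : Function.Involutive Θ)
    (hμ : μ ≪ μ.map Θ) :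
    (fun ω ↦ entropyProduction μ Θ (Θ ω)) =ᵐ[μ] fun ω ↦ -entropyProduction μ Θ ω := by
  filter_upwards [rnDeriv_map_involutive_comp_ae_eq_inv hΘ hinv hμ] with ω hω
  rw [entropyProduction, entropyProduction, hω, Pi.inv_apply, ENNReal.toReal_inv, Real.log_inv]

theorem measure_entropyProduction_preimage_neg_le (hΘ : Measurable Θ)
    (hinv : Function.Involutive Θ) (hμ : μ ≪ μ.map Θ) {S : Set ℝ} {a : ℝ} (hS : S ⊆ Ici a) :
    μ (entropyProduction μ Θ ⁻¹' (-S)) ≤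
      ENNReal.ofReal (Real.exp (-a)) * μ (entropyProduction μ Θ ⁻¹' S) := by
  set σ := entropyProduction μ Θ
  let e := MeasurableEquiv.ofInvolutive Θ hinv hΘ
  have : SigmaFinite (μ.map Θ) := e.measurableEmbedding.sigmaFinite_map
  have hpreimage : Θ ⁻¹' (σ ⁻¹' (-S)) =ᵐ[μ] σ ⁻¹' S := by
    have hσΘ : (fun ω ↦ σ (Θ ω)) =ᵐ[μ] fun ω ↦ -σ ω :=
      entropyProduction_comp_ae_eq_neg hΘ hinv hμ
    rw [Filter.eventuallyEq_set]
    filter_upwards [hσΘ] with ω hω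
    rw [Set.mem_preimage, Set.mem_preimage, Set.mem_neg, hω, neg_neg, Set.mem_preimage]
  have hdensity : ∀ᵐ ω ∂μ.map Θ, ω ∈ σ ⁻¹' (-S) →
      μ.rnDeriv (μ.map Θ) ω ≤ ENNReal.ofReal (Real.exp (-a)) := by
    filter_upwards [μ.rnDeriv_lt_top (μ.map Θ)] with ω hfin hω
    have hσ : σ ω ≤ -a := le_neg_of_le_neg (hS hω)
    calc μ.rnDeriv (μ.map Θ) ω ≤ ENNReal.ofReal (Real.exp (σ ω)) := by
          rcases eq_or_ne (μ.rnDeriv (μ.map Θ) ω) 0 with h0 | h0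
          · simp [h0]
          · rw [show σ ω = Real.log _ from rfl, Real.exp_log (ENNReal.toReal_pos h0 hfin.ne),
              ENNReal.ofReal_toReal hfin.ne]
      _ ≤ ENNReal.ofReal (Real.exp (-a)) := ENNReal.ofReal_le_ofReal (Real.exp_le_exp.2 hσ)
  calc μ (σ ⁻¹' (-S)) = ∫⁻ ω in σ ⁻¹' (-S), μ.rnDeriv (μ.map Θ) ω ∂μ.map Θ :=
        (Measure.setLIntegral_rnDeriv hμ _).symm
    _ ≤ ∫⁻ _ in σ ⁻¹' (-S), ENNReal.ofReal (Real.exp (-a)) ∂μ.map Θ :=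
        setLIntegral_mono_ae aemeasurable_const hdensity
    _ = ENNReal.ofReal (Real.exp (-a)) * μ (Θ ⁻¹' (σ ⁻¹' (-S))) := by
        rw [setLIntegral_const, show μ.map Θ = μ.map e from rfl, e.map_apply]; rfl
    _ = ENNReal.ofReal (Real.exp (-a)) * μ (σ ⁻¹' S) := by rw [measure_congr hpreimage]

theorem inv_mul_log_measure_entropyProduction_div_mem_neg_le (hΘ : Measurable Θ)
    (hinv : Function.Involutive Θ) (hμ : μ ≪ μ.map Θ) {Γ : Set ℝ} {a t : ℝ} (hΓ : Γ ⊆ Ici a)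
    (ht : 0 < t) :
    ((t⁻¹ : ℝ) : EReal) * ENNReal.log (μ {ω | entropyProduction μ Θ ω / t ∈ -Γ}) ≤
      ((-a : ℝ) : EReal) +
        ((t⁻¹ : ℝ) : EReal) * ENNReal.log (μ {ω | entropyProduction μ Θ ω / t ∈ Γ}) := by
  refine EReal.coe_inv_mul_log_le_of_le_ofReal_exp ht ?_
  have hscaled : (· / t) ⁻¹' Γ ⊆ Ici (t * a) := fun x hx ↦ by
    rw [mem_Ici, ← le_div_iff₀' ht]
    exact hΓ hx
  convert measure_entropyProduction_preimage_neg_le hΘ hinv hμ hscaled using 3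
  · ext ω
    simp only [Set.mem_neg, Set.mem_preimage, neg_div]
    rfl
  · rfl

end MeasureTheory.Measure

/-- `L Γ n` stands for `n⁻¹ log Pₙ{σₙ / n ∈ Γ}`. -/
def SatisfiesLDP (L : Set ℝ → ℕ → EReal) (I : ℝ → EReal) : Prop :=
  ∀ Γ : Set ℝ, MeasurableSet Γ →
    -(⨅ s ∈ interior Γ, I s) ≤ liminf (L Γ) atTop ∧ limsup (L Γ) atTop ≤ -(⨅ s ∈ closure Γ, I s)

def HasFluctuationBound (L : Set ℝ → ℕ → EReal) : Prop :=
  ∀ (a : ℝ) (Γ : Set ℝ), Γ ⊆ Ici a → ∀ᶠ n in atTop, L (-Γ) n ≤ ((-a : ℝ) : EReal) + L Γ n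

namespace SatisfiesLDP

variable {L : Set ℝ → ℕ → EReal} {I : ℝ → EReal}

theorem neg_le_liminf (hL : SatisfiesLDP L I) {Γ : Set ℝ} (hΓ : IsOpen Γ) {s : ℝ} (hs : s ∈ Γ) :
    -I s ≤ liminf (L Γ) atTop := by
  refine le_trans ?_ (hL Γ hΓ.measurableSet).1
  rw [EReal.neg_le_neg_iff, hΓ.interior_eq]
  exact iInf₂_le s hs

theorem limsup_le_neg (hL : SatisfiesLDP L I) {Γ : Set ℝ} (hΓ : MeasurableSet Γ) {z : EReal}
    (hz : ∀ x ∈ closure Γ, z ≤ I x) : limsup (L Γ) atTop ≤ -z :=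
  (hL Γ hΓ).2.trans (EReal.neg_le_neg_iff.2 (le_iInf₂ hz))

theorem neg_le_sub_of_le_on_Icc (hL : SatisfiesLDP L I)
    (hsym : HasFluctuationBound L)
    {s ε z : ℝ} (hε : 0 < ε) (hz : ∀ x ∈ Icc (-s - ε) (-s + ε), (z : EReal) ≤ I x) :
    -I s ≤ ((s + ε - z : ℝ) : EReal) := by
  set Γ := Ioo (-s - ε) (-s + ε)
  have hs : s ∈ -Γ := by
    rw [Set.mem_neg]
    constructor <;> linarith
  have hshift : ∀ᶠ n in atTop, L (-Γ) n ≤ ((s + ε : ℝ) : EReal) + L Γ n := by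
    simpa only [neg_sub, sub_neg_eq_add, add_comm ε] using hsym (-s - ε) Γ fun x hx ↦ hx.1.le
  calc -I s ≤ liminf (L (-Γ)) atTop := hL.neg_le_liminf isOpen_Ioo.neg hs
    _ ≤ ((s + ε : ℝ) : EReal) + liminf (L Γ) atTop := EReal.liminf_le_coe_add_liminf hshift
    _ ≤ ((s + ε : ℝ) : EReal) + limsup (L Γ) atTop := by gcongr; exact liminf_le_limsup
    _ ≤ ((s + ε : ℝ) : EReal) + -(z : EReal) := by
        gcongr
        exact hL.limsup_le_neg measurableSet_Ioo fun x hx ↦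
          hz x (closure_minimal Ioo_subset_Icc_self isClosed_Icc hx)
    _ = ((s + ε - z : ℝ) : EReal) := by norm_cast

theorem rate_neg_le_add (hL : SatisfiesLDP L I) (hI : ∀ s, I s ≠ ⊥) (hlsc : LowerSemicontinuous I)
    (hsym : HasFluctuationBound L)
    (s : ℝ) : I (-s) ≤ I s + s := by
  by_contra! hlt
  obtain ⟨z, hz, hzI⟩ := EReal.exists_between_coe_real hlt
  have hs_top : I s ≠ ⊤ := by
    rintro htop
    rw [htop, EReal.top_add_coe] at hz
    exact not_top_lt hz
  obtain ⟨c, hc⟩ : ∃ c : ℝ, I s = c := ⟨(I s).toReal, (EReal.coe_toReal hs_top (hI s)).symm⟩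
  rw [hc, ← EReal.coe_add, EReal.coe_lt_coe_iff] at hz
  obtain ⟨δ, hδ, hnear⟩ := Metric.eventually_nhds_iff.1 (hlsc (-s) z hzI)
  obtain ⟨ε, hε, hεδ, hεz⟩ : ∃ ε, 0 < ε ∧ ε < δ ∧ ε < z - (c + s) :=
    ⟨min δ (z - (c + s)) / 2, half_pos (lt_min hδ (by linarith)),
      by linarith [min_le_left δ (z - (c + s))], by linarith [min_le_right δ (z - (c + s))]⟩
  have hle := hL.neg_le_sub_of_le_on_Icc hsym hε (s := s) (z := z) fun x hx ↦ by
    refine (hnear ?_).le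
    rw [Real.dist_eq, abs_lt]
    constructor <;> linarith [hx.1, hx.2]
  rw [hc, ← EReal.coe_neg, EReal.coe_le_coe_iff] at hle
  linarith

theorem rate_neg_eq_add (hL : SatisfiesLDP L I) (hI : ∀ s, I s ≠ ⊥) (hlsc : LowerSemicontinuous I)
    (hsym : HasFluctuationBound L)
    (s : ℝ) : I (-s) = I s + s := by
  refine le_antisymm (hL.rate_neg_le_add hI hlsc hsym s) ?_
  calc I s + s ≤ I (-s) + ((-s : ℝ) : EReal) + s := by
        gcongr
        simpa using hL.rate_neg_le_add hI hlsc hsym (-s)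
    _ = I (-s) := by rw [add_assoc, ← EReal.coe_add, neg_add_cancel, EReal.coe_zero, add_zero]

end SatisfiesLDP

/-- **The fluctuation theorem implies the Gallavotti–Cohen fluctuation relation.**
For each `n`, let `(Ω_n, F_n, P_n)` be a probability space with a measurable involution
`Θ_n` such that `P̂_n = P_n ∘ Θ_n` is equivalent to `P_n`, and set
`σ_n = log (dP_n/dP̂_n)`.  If there is a lower semicontinuous rate function
`I : ℝ → [0, +∞]` such that for every Borel `Γ ⊆ ℝ`,
`-inf_{int Γ} I ≤ liminf (1/n) log P_n{σ_n/n ∈ Γ}` and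
`limsup (1/n) log P_n{σ_n/n ∈ Γ} ≤ -inf_{cl Γ} I`, then `I(-s) = I(s) + s` for all `s`. -/
theorem fluctuation_relation_of_fluctuation_theorem
    (Ω : ℕ → Type*) [∀ n, MeasurableSpace (Ω n)]
    (P : ∀ n, Measure (Ω n)) [∀ n, IsProbabilityMeasure (P n)]
    (Θ : ∀ n, Ω n → Ω n) (hΘmeas : ∀ n, Measurable (Θ n))
    (hΘinv : ∀ n, Θ n ∘ Θ n = id)
    (hequiv : ∀ n, (P n).map (Θ n) ≪ P n ∧ P n ≪ (P n).map (Θ n))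
    (σ : ∀ n, Ω n → ℝ)
    (hσ : ∀ n, σ n = fun ω => Real.log (((P n).rnDeriv ((P n).map (Θ n))) ω).toReal)
    (I : ℝ → EReal) (hInonneg : ∀ s, 0 ≤ I s) (hIlsc : LowerSemicontinuous I)
    (hLDP : ∀ Γ : Set ℝ, MeasurableSet Γ →
      -(⨅ s ∈ interior Γ, I s) ≤
          Filter.liminf
            (fun n : ℕ => (((n : ℝ)⁻¹ : ℝ) : EReal) *
              ENNReal.log ((P n) {ω | σ n ω / n ∈ Γ})) atTop ∧
        Filter.limsup
            (fun n : ℕ => (((n : ℝ)⁻¹ : ℝ) : EReal) *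
              ENNReal.log ((P n) {ω | σ n ω / n ∈ Γ})) atTop ≤
          -(⨅ s ∈ closure Γ, I s)) :
    ∀ s : ℝ, I (-s) = I s + (s : EReal) := by
  have hsym : HasFluctuationBound fun Γ n ↦
      (((n : ℝ)⁻¹ : ℝ) : EReal) * ENNReal.log ((P n) {ω | σ n ω / n ∈ Γ}) :=
    fun a Γ hΓ ↦ eventually_atTop.2 ⟨1, fun n hn ↦ by
      dsimp only
      rw [hσ n]
      exact Measure.inv_mul_log_measure_entropyProduction_div_mem_neg_le (hΘmeas n)
        (congrFun (hΘinv n)) (hequiv n).2 hΓ (Nat.cast_pos.2 hn)⟩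
  exact SatisfiesLDP.rate_neg_eq_add hLDP (fun s ↦ (EReal.bot_lt_zero.trans_le (hInonneg s)).ne')
    hIlsc hsym
end

section
/- Let M be a compact metric space and φ: M → M continuous. Let G = {G_n} be an asymptotically additive sequence of bounded Borel functions on M with approximating sequence {G^(k)} ⊂ C(M). Then: (i) for every φ-invariant Borel probability measure P on M the limit G(P) = lim_{n→∞} (1/n) ∫ G_n dP exists and is finite; (ii) G(P) = lim_{k→∞} ∫ G^(k) dP; (iii) both limits are uniform in P over the set of φ-invariant measures; and (iv) the map P ↦ G(P) is continuous on the set of φ-invariant Borel probability measures with the weak topology. -/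
open MeasureTheory Filter Topology Set
open scoped ENNReal

variable {M : Type*} [MetricSpace M] [CompactSpace M] [MeasurableSpace M] [BorelSpace M]

/-- Birkhoff sum `S_n V = ∑_{j<n} V ∘ φ^j`. -/
noncomputable def birkhoff (φ : M → M) (V : M → ℝ) (n : ℕ) (x : M) : ℝ :=
  ∑ j ∈ Finset.range n, V (φ^[j] x)

/-- Supremum norm `‖f‖_∞` valued in `ℝ≥0∞`. -/
noncomputable def supNorm (f : M → ℝ) : ℝ≥0∞ :=
  ⨆ x : M, ENNReal.ofReal |f x|

/-- `Gk` is an approximating sequence for `G`: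
`lim_{k→∞} limsup_{n→∞} (1/n) ‖G_n − S_n G^{(k)}‖_∞ = 0`. -/
def ApproxSeq (φ : M → M) (G : ℕ → M → ℝ) (Gk : ℕ → M → ℝ) : Prop :=
  Tendsto
    (fun k => Filter.limsup
      (fun n => supNorm (fun x => G n x - birkhoff φ (Gk k) n x) / (n : ℝ≥0∞)) atTop)
    atTop (nhds 0)

/-- `G = {G_n}` is an asymptotically additive sequence of bounded Borel functions. -/
def AsympAdd (φ : M → M) (G : ℕ → M → ℝ) : Prop :=
  (∀ n, Measurable (G n) ∧ ∃ C : ℝ, ∀ x, |G n x| ≤ C) ∧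
  ∃ Gk : ℕ → M → ℝ, (∀ k, Continuous (Gk k)) ∧ ApproxSeq φ G Gk

/-- Bowen ball `B_n(x, ε)`. -/
def bowenBall (φ : M → M) (n : ℕ) (x : M) (ε : ℝ) : Set M :=
  {y | ∀ k < n, dist (φ^[k] y) (φ^[k] x) < ε}

/-- `E` is `(ε,n)`-spanning. -/
def IsSpanning (φ : M → M) (n : ℕ) (ε : ℝ) (E : Finset M) : Prop :=
  ∀ x : M, ∃ y ∈ E, x ∈ bowenBall φ n y ε

/-- `E` is `(ε,n)`-separated. -/
def IsSeparated (φ : M → M) (n : ℕ) (ε : ℝ) (E : Finset M) : Prop :=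
  ∀ x ∈ E, ∀ y ∈ E, x ≠ y → x ∉ bowenBall φ n y ε

/-- `S(G,ε,n)`. -/
noncomputable def spanSum (φ : M → M) (G : ℕ → M → ℝ) (ε : ℝ) (n : ℕ) : ℝ≥0∞ :=
  ⨅ (E : Finset M) (_ : IsSpanning φ n ε E), ∑ x ∈ E, ENNReal.ofReal (Real.exp (G n x))

/-- `N(G,ε,n)`. -/
noncomputable def sepSum (φ : M → M) (G : ℕ → M → ℝ) (ε : ℝ) (n : ℕ) : ℝ≥0∞ :=
  ⨆ (E : Finset M) (_ : IsSeparated φ n ε E), ∑ x ∈ E, ENNReal.ofReal (Real.exp (G n x))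

/-- Topological pressure of an asymptotically additive sequence, via `(ε,n)`-separated sets. -/
noncomputable def pressure (φ : M → M) (G : ℕ → M → ℝ) : EReal :=
  ⨆ (ε : ℝ) (_ : 0 < ε),
    Filter.limsup (fun n : ℕ => (((n : ℝ)⁻¹ : ℝ) : EReal) * ENNReal.log (sepSum φ G ε n)) atTop

/-- Entropy of the partition of `M` induced by a map into a finite type. -/
noncomputable def mapEntropy (μ : Measure M) {α : Type} [Fintype α] (c : M → α) : ℝ :=
  ∑ a : α, Real.negMulLog ((μ (c ⁻¹' {a})).toReal)

/-- Kolmogorov–Sinai entropy of `φ` along a finite partition `P` (encoded as `P : M → Fin m`). -/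
noncomputable def partKS (φ : M → M) (μ : Measure M) {m : ℕ} (P : M → Fin m) : ℝ :=
  ⨅ n : ℕ, ((n : ℝ) + 1)⁻¹ *
    mapEntropy μ (fun x => fun i : Fin (n + 1) => P (φ^[(i : ℕ)] x))

/-- Kolmogorov–Sinai entropy `h_φ(μ)`. -/
noncomputable def ksEntropy (φ : M → M) (μ : Measure M) : ℝ≥0∞ :=
  ⨆ (m : ℕ) (P : M → Fin m) (_ : Measurable P), ENNReal.ofReal (partKS φ μ P)

/-- Set of `n`-periodic points of `φ`. -/
def perSet (φ : M → M) (n : ℕ) : Set M := {x | φ^[n] x = x}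

/-- `Z_n(G) = ∑_{x ∈ M_n} e^{G_n(x)}`, as an extended nonnegative real. -/
noncomputable def perPartition (φ : M → M) (G : ℕ → M → ℝ) (n : ℕ) : ℝ≥0∞ :=
  ∑' x : perSet φ n, ENNReal.ofReal (Real.exp (G n x))

/-- The periodic-orbit measure `P_n = Z_n⁻¹ ∑_{x ∈ M_n} e^{G_n(x)} δ_x`. -/
noncomputable def perGibbs (φ : M → M) (G : ℕ → M → ℝ) (n : ℕ) : Measure M :=
  (perPartition φ G n)⁻¹ •
    Measure.sum (fun x : perSet φ n => ENNReal.ofReal (Real.exp (G n x)) • Measure.dirac (x : M))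

/-- Weak periodic specification property. -/
def WPS (φ : M → M) : Prop :=
  ∃ m : ℝ → ℕ → ℕ, ∃ N : ℝ → ℕ,
    (∀ δ : ℝ, 0 < δ → ∀ n, N δ ≤ n → m δ n < n) ∧
    (∀ δ : ℝ, 0 < δ → ∀ n, N δ ≤ n → ∀ x : M,
      ∃ y ∈ perSet φ n, y ∈ bowenBall φ (n - m δ n) x δ) ∧
    Tendsto (fun δ : ℝ => Filter.limsup (fun n => (m δ n : ℝ≥0∞) / (n : ℝ≥0∞)) atTop)
      (𝓝[>] (0 : ℝ)) (nhds 0)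

/-- Specification property (S). -/
def SpecProp (φ : M → M) : Prop :=
  ∀ δ : ℝ, 0 < δ → ∃ N : ℕ, ∀ (r : ℕ) (a b : Fin r → ℕ) (pts : Fin r → M),
    (∀ i, a i ≤ b i) →
    (∀ i j, i ≠ j → ∀ k, a i ≤ k → k ≤ b i → ∀ l, a j ≤ l → l ≤ b j → N ≤ Nat.dist k l) →
    ∃ x : M, ∀ i, ∀ k, a i ≤ k → k ≤ b i → dist (φ^[k] x) (φ^[k] (pts i)) < δ

/-- Condition (PAP): finitely many periodic points and periodic approximation of pressure. -/
def PAP (φ : M → M) : Prop :=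
  (∀ n : ℕ, 0 < n → (perSet φ n).Finite) ∧
  ∀ G : ℕ → M → ℝ, AsympAdd φ G →
    Tendsto (fun n : ℕ => (((n : ℝ)⁻¹ : ℝ) : EReal) * ENNReal.log (perPartition φ G n)) atTop
      (nhds (pressure φ G))

/-- Condition (USCE): finite topological entropy and upper semicontinuous entropy map. -/
def USCE (φ : M → M) : Prop :=
  pressure φ (fun _ _ => (0 : ℝ)) ≠ ⊤ ∧
  UpperSemicontinuousOn (fun μ : ProbabilityMeasure M => ksEntropy φ (μ : Measure M))
    {μ : ProbabilityMeasure M | (μ : Measure M).map φ = (μ : Measure M)}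

/-- Empirical measure `μ_n^x`. -/
noncomputable def empMeas (φ : M → M) (n : ℕ) (x : M) : Measure M :=
  ((n : ℝ≥0∞))⁻¹ • ∑ i ∈ Finset.range n, Measure.dirac (φ^[i] x)

/-- Weak Gibbs property of `P` for `G`, with (finite, real) pressure `p`. -/
def WeakGibbs (φ : M → M) (G : ℕ → M → ℝ) (p : ℝ) (P : Measure M) : Prop :=
  ∃ K : ℕ → ℝ → ℝ,
    (∀ n : ℕ, ∀ ε : ℝ, 0 < ε → 1 ≤ K n ε) ∧
    (∀ n : ℕ, 0 < n → ∀ ε : ℝ, 0 < ε → ∀ x : M,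
      ENNReal.ofReal (Real.exp (G n x - n * p)) / ENNReal.ofReal (K n ε)
          ≤ P (bowenBall φ n x ε) ∧
      P (bowenBall φ n x ε)
          ≤ ENNReal.ofReal (K n ε) * ENNReal.ofReal (Real.exp (G n x - n * p))) ∧
    Tendsto (fun ε : ℝ => Filter.limsup (fun n => ENNReal.ofReal (Real.log (K n ε) / n)) atTop)
      (𝓝[>] (0 : ℝ)) (nhds 0)

/-! For a `φ`-invariant probability measure `μ`, invariance gives `∫ S_n g dμ = n ∫ g dμ`, so
`|(1/n) ∫ G_n dμ - ∫ G^(k) dμ| ≤ (1/n) ‖G_n - S_n G^(k)‖_∞`, a bound that does not depend on `μ`.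
Hence `k ↦ ∫ G^(k) dμ` is uniformly Cauchy on the invariant measures; its limit `G(μ)` is also the
uniform limit of `(1/n) ∫ G_n dμ`, and it is continuous as a uniform limit of the weakly continuous
maps `μ ↦ ∫ G^(k) dμ`. -/

section UniformApproximation

variable {α β ι κ : Type*} [PseudoEMetricSpace β] {F : ι → α → β} {A : κ → α → β}
  {p : Filter ι} {q : Filter κ} {s : Set α}

theorem uniformCauchySeqOn_of_eventually_edist_lt [p.NeBot]
    (h : ∀ ε > 0, ∀ᶠ k in q, ∀ᶠ n in p, ∀ a ∈ s, edist (F n a) (A k a) < ε) :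
    UniformCauchySeqOn A q s := by
  intro u hu
  obtain ⟨ε, hε, hεu⟩ := mem_uniformity_edist.1 hu
  have hε2 := h (ε / 2) (ENNReal.half_pos hε.ne')
  filter_upwards [hε2.prod_mk hε2] with ⟨k, l⟩ ⟨hk, hl⟩ a ha
  obtain ⟨n, hkn, hln⟩ := (hk.and hl).exists
  refine hεu ?_
  calc edist (A k a) (A l a) ≤ edist (F n a) (A k a) + edist (F n a) (A l a) :=
        edist_triangle_left _ _ _
    _ < ε / 2 + ε / 2 := ENNReal.add_lt_add (hkn a ha) (hln a ha)
    _ = ε := ENNReal.add_halves ε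

theorem tendstoUniformlyOn_of_eventually_edist_lt [q.NeBot]
    (h : ∀ ε > 0, ∀ᶠ k in q, ∀ᶠ n in p, ∀ a ∈ s, edist (F n a) (A k a) < ε)
    {g : α → β} (hA : TendstoUniformlyOn A g q s) : TendstoUniformlyOn F g p s := by
  refine EMetric.tendstoUniformlyOn_iff.2 fun ε hε => ?_
  have hε2 : 0 < ε / 2 := ENNReal.half_pos hε.ne'
  obtain ⟨k, hAk, hFk⟩ := ((EMetric.tendstoUniformlyOn_iff.1 hA _ hε2).and (h _ hε2)).exists
  filter_upwards [hFk] with n hn a ha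
  calc edist (g a) (F n a) ≤ edist (g a) (A k a) + edist (F n a) (A k a) :=
        edist_triangle_right _ _ _
    _ < ε / 2 + ε / 2 := ENNReal.add_lt_add (hAk a ha) (hn a ha)
    _ = ε := ENNReal.add_halves ε

theorem exists_tendstoUniformlyOn_of_eventually_edist_lt [CompleteSpace β] [Nonempty β]
    [p.NeBot] [SemilatticeSup κ] [Nonempty κ]
    (h : ∀ ε > 0, ∀ᶠ k in atTop, ∀ᶠ n in p, ∀ a ∈ s, edist (F n a) (A k a) < ε) :
    ∃ g : α → β, TendstoUniformlyOn F g p s ∧ TendstoUniformlyOn A g atTop s := by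
  have hA := uniformCauchySeqOn_of_eventually_edist_lt h
  have hAg : TendstoUniformlyOn A (fun a => limUnder atTop (A · a)) atTop s :=
    hA.tendstoUniformlyOn_of_tendsto fun a ha => (hA.cauchySeq ha).tendsto_limUnder
  exact ⟨_, tendstoUniformlyOn_of_eventually_edist_lt h hAg, hAg⟩

end UniformApproximation

section Birkhoff

variable {X : Type*} [MeasurableSpace X] {φ : X → X} {μ : Measure X}

theorem integrable_comp_iterate (hφ : MeasurePreserving φ μ μ) {g : X → ℝ} (hg : Integrable g μ)
    (j : ℕ) : Integrable (fun x => g (φ^[j] x)) μ :=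
  (hφ.iterate j).integrable_comp_of_integrable hg

theorem integrable_birkhoff (hφ : MeasurePreserving φ μ μ) {g : X → ℝ} (hg : Integrable g μ)
    (n : ℕ) : Integrable (birkhoff φ g n) μ :=
  integrable_finsetSum _ fun j _ => integrable_comp_iterate hφ hg j

theorem integral_birkhoff (hφ : MeasurePreserving φ μ μ) {g : X → ℝ} (hg : Integrable g μ)
    (n : ℕ) : ∫ x, birkhoff φ g n x ∂μ = n * ∫ x, g x ∂μ := by
  have hcomp (j : ℕ) : ∫ x, g (φ^[j] x) ∂μ = ∫ x, g x ∂μ := by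
    have hφj := hφ.iterate j
    rw [← integral_map hφj.measurable.aemeasurable (by rw [hφj.map_eq]; exact hg.1), hφj.map_eq]
  simp only [birkhoff]
  rw [integral_finsetSum _ fun j _ => integrable_comp_iterate hφ hg j]
  simp [hcomp]

theorem enorm_integral_le_supNorm [IsProbabilityMeasure μ] (f : X → ℝ) :
    ‖∫ x, f x ∂μ‖ₑ ≤ supNorm f :=
  calc ‖∫ x, f x ∂μ‖ₑ ≤ ∫⁻ x, ‖f x‖ₑ ∂μ := enorm_integral_le_lintegral_enorm f
    _ ≤ ∫⁻ _, supNorm f ∂μ := lintegral_mono fun x => by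
        rw [Real.enorm_eq_ofReal_abs]
        exact le_iSup (fun x => ENNReal.ofReal |f x|) x
    _ = supNorm f := by simp

theorem edist_inv_mul_integral_le_supNorm [IsProbabilityMeasure μ]
    (hφ : MeasurePreserving φ μ μ) {f g : X → ℝ} (hf : Integrable f μ) (hg : Integrable g μ)
    {n : ℕ} (hn : n ≠ 0) :
    edist ((n : ℝ)⁻¹ * ∫ x, f x ∂μ) (∫ x, g x ∂μ) ≤
      supNorm (fun x => f x - birkhoff φ g n x) / n := by
  have hsplit : (n : ℝ)⁻¹ * ∫ x, f x ∂μ - ∫ x, g x ∂μ =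
      (n : ℝ)⁻¹ * ∫ x, (f x - birkhoff φ g n x) ∂μ := by
    rw [integral_sub hf (integrable_birkhoff hφ hg n), integral_birkhoff hφ hg]
    field_simp
  rw [edist_eq_enorm_sub, hsplit, enorm_mul, enorm_inv (by positivity), Real.enorm_natCast,
    ENNReal.div_eq_inv_mul]
  gcongr
  exact enorm_integral_le_supNorm _

end Birkhoff

theorem ApproxSeq.eventually_eventually_lt {X : Type*} {φ : X → X} {G Gk : ℕ → X → ℝ}
    (h : ApproxSeq φ G Gk) {ε : ℝ≥0∞} (hε : 0 < ε) :
    ∀ᶠ k in atTop, ∀ᶠ n in atTop, supNorm (fun x => G n x - birkhoff φ (Gk k) n x) / n < ε := by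
  filter_upwards [h.eventually_lt_const hε] with k hk
  exact eventually_lt_of_limsup_lt hk

/-- **Existence, uniformity and continuity of `G(P) = lim (1/n) ∫ G_n dP`**
for an asymptotically additive sequence `G` of bounded Borel functions with approximating
sequence `Gk ⊆ C(M)`: there is a function `GG` on probability measures such that
`(1/n) ∫ G_n dμ → GG μ` and `∫ G^{(k)} dμ → GG μ`, both uniformly over the set of
`φ`-invariant Borel probability measures, and `GG` is continuous on that set (with the
weak topology). -/
theorem asympAdd_limit_exists_uniform_continuous
    {M : Type*} [MetricSpace M] [CompactSpace M] [MeasurableSpace M] [BorelSpace M]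
    (φ : M → M) (hφ : Continuous φ)
    (G : ℕ → M → ℝ) (hGmeas : ∀ n, Measurable (G n))
    (hGbdd : ∀ n, ∃ C : ℝ, ∀ x, |G n x| ≤ C)
    (Gk : ℕ → M → ℝ) (hGk : ∀ k, Continuous (Gk k))
    (happrox : ApproxSeq φ G Gk) :
    ∃ GG : ProbabilityMeasure M → ℝ,
      TendstoUniformlyOn
        (fun (n : ℕ) (μ : ProbabilityMeasure M) => (n : ℝ)⁻¹ * ∫ x, G n x ∂(μ : Measure M))
        GG atTop {μ : ProbabilityMeasure M | (μ : Measure M).map φ = (μ : Measure M)} ∧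
      TendstoUniformlyOn
        (fun k (μ : ProbabilityMeasure M) => ∫ x, Gk k x ∂(μ : Measure M))
        GG atTop {μ : ProbabilityMeasure M | (μ : Measure M).map φ = (μ : Measure M)} ∧
      ContinuousOn GG {μ : ProbabilityMeasure M | (μ : Measure M).map φ = (μ : Measure M)} := by
  have hGint (n : ℕ) (μ : ProbabilityMeasure M) : Integrable (G n) (μ : Measure M) := by
    obtain ⟨C, hC⟩ := hGbdd n
    exact .of_bound (hGmeas n).aestronglyMeasurable C (ae_of_all _ hC)
  have hGkint (k : ℕ) (μ : ProbabilityMeasure M) : Integrable (Gk k) (μ : Measure M) :=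
    (hGk k).integrable_of_hasCompactSupport (.of_compactSpace _)
  have hclose : ∀ ε > 0, ∀ᶠ k in atTop, ∀ᶠ n : ℕ in atTop,
      ∀ μ ∈ {μ : ProbabilityMeasure M | (μ : Measure M).map φ = (μ : Measure M)},
        edist ((n : ℝ)⁻¹ * ∫ x, G n x ∂(μ : Measure M)) (∫ x, Gk k x ∂(μ : Measure M)) < ε := by
    intro ε hε
    filter_upwards [happrox.eventually_eventually_lt hε] with k hk
    filter_upwards [hk, eventually_ne_atTop 0] with n hn hn0 μ hμ
    exact (edist_inv_mul_integral_le_supNorm ⟨hφ.measurable, hμ⟩ (hGint n μ) (hGkint k μ)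
      hn0).trans_lt hn
  obtain ⟨GG, hG, hGGk⟩ := exists_tendstoUniformlyOn_of_eventually_edist_lt hclose
  have hcont (k : ℕ) : Continuous fun μ : ProbabilityMeasure M => ∫ x, Gk k x ∂(μ : Measure M) :=
    ProbabilityMeasure.continuous_integral_boundedContinuousFunction (.mkOfCompact ⟨Gk k, hGk k⟩)
  exact ⟨GG, hG, hGGk, hGGk.continuousOn (.of_forall fun k => (hcont k).continuousOn)⟩
end

section
/- Let M be a compact metric space with metric d and φ: M → M continuous. If G = {G_n} is an asymptotically additive sequence of bounded Borel functions on M, then G has tempered variation: lim_{δ↓0} limsup_{n→∞} sup_{x∈M} sup_{y,z ∈ B_n(x,δ)} (1/n)|G_n(y) − G_n(z)| = 0. -/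
open MeasureTheory Filter Topology Set
open scoped ENNReal

variable {M : Type*} [MetricSpace M] [CompactSpace M] [MeasurableSpace M] [BorelSpace M]

/-!
Approximate `G_n` by the Birkhoff sum `S_n G^(k)` of a continuous `G^(k)`. Along a Bowen ball
`B_n(x, δ)` the orbits of `y` and `z` stay `2δ`-close for `n` steps, so uniform continuity of
`G^(k)` on the compact space makes `|S_n G^(k)(y) − S_n G^(k)(z)| / n` as small as we like, while
the error `|G_n − S_n G^(k)| / n` is asymptotically controlled by the approximation property.
-/

section TemperedVariation

variable {X : Type*}

noncomputable def bowenVariation [MetricSpace X] (φ : X → X) (G : ℕ → X → ℝ) (δ : ℝ) (n : ℕ) :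
    ℝ≥0∞ :=
  ⨆ x : X, ⨆ y ∈ bowenBall φ n x δ, ⨆ z ∈ bowenBall φ n x δ, ENNReal.ofReal (|G n y - G n z| / n)

lemma dist_iterate_lt_of_mem_bowenBall [MetricSpace X] {φ : X → X} {n j : ℕ} {x y z : X} {δ : ℝ}
    (hy : y ∈ bowenBall φ n x δ) (hz : z ∈ bowenBall φ n x δ) (hj : j < n) :
    dist (φ^[j] y) (φ^[j] z) < 2 * δ :=
  calc dist (φ^[j] y) (φ^[j] z) ≤ dist (φ^[j] y) (φ^[j] x) + dist (φ^[j] z) (φ^[j] x) :=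
        dist_triangle_right _ _ _
    _ < δ + δ := add_lt_add (hy j hj) (hz j hj)
    _ = 2 * δ := (two_mul δ).symm

lemma abs_birkhoff_sub_le {φ : X → X} {V : X → ℝ} {n : ℕ} {y z : X} {r : ℝ}
    (h : ∀ j < n, |V (φ^[j] y) - V (φ^[j] z)| ≤ r) :
    |birkhoff φ V n y - birkhoff φ V n z| ≤ n * r := by
  rw [birkhoff, birkhoff, ← Finset.sum_sub_distrib]
  refine (Finset.abs_sum_le_sum_abs _ _).trans ?_
  simpa using Finset.sum_le_card_nsmul _ _ r fun j hj => h j (Finset.mem_range.1 hj)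

lemma ofReal_abs_le_supNorm (f : X → ℝ) (x : X) : ENNReal.ofReal |f x| ≤ supNorm f :=
  le_iSup (fun x => ENNReal.ofReal |f x|) x

lemma ofReal_abs_div_le_supNorm_div (f : X → ℝ) (x : X) (n : ℕ) :
    ENNReal.ofReal (|f x| / n) ≤ supNorm f / n := by
  rcases Nat.eq_zero_or_pos n with rfl | hn
  · simp
  rw [ENNReal.ofReal_div_of_pos (Nat.cast_pos.2 hn), ENNReal.ofReal_natCast]
  exact ENNReal.div_le_div_right (ofReal_abs_le_supNorm f x) _

lemma bowenVariation_le [MetricSpace X] {φ : X → X} {G : ℕ → X → ℝ} {V : X → ℝ} {δ r : ℝ}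
    (hV : ∀ a b, dist a b < 2 * δ → |V a - V b| ≤ r) (n : ℕ) :
    bowenVariation φ G δ n ≤
      2 * (supNorm (fun x => G n x - birkhoff φ V n x) / n) + ENNReal.ofReal r := by
  refine iSup_le fun x => iSup₂_le fun y hy => iSup₂_le fun z hz => ?_
  rcases Nat.eq_zero_or_pos n with rfl | hn
  · simp
  set D := fun x => G n x - birkhoff φ V n x
  have hS : |birkhoff φ V n y - birkhoff φ V n z| / n ≤ r := by
    rw [div_le_iff₀ (Nat.cast_pos.2 hn), mul_comm]
    exact abs_birkhoff_sub_le fun j hj => hV _ _ (dist_iterate_lt_of_mem_bowenBall hy hz hj)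
  have hsplit : |G n y - G n z| / n ≤
      |D y| / n + |D z| / n + |birkhoff φ V n y - birkhoff φ V n z| / n := by
    rw [← add_div, ← add_div]
    gcongr
    calc |G n y - G n z| = |D y - D z + (birkhoff φ V n y - birkhoff φ V n z)| := by
          congr 1; simp only [D]; ring
      _ ≤ |D y| + |D z| + |birkhoff φ V n y - birkhoff φ V n z| :=
          (abs_add_le _ _).trans (add_le_add_left (abs_sub _ _) _)
  calc ENNReal.ofReal (|G n y - G n z| / n)
      ≤ ENNReal.ofReal (|D y| / n + |D z| / n + r) :=
        ENNReal.ofReal_le_ofReal (hsplit.trans (by gcongr))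
    _ ≤ ENNReal.ofReal (|D y| / n) + ENNReal.ofReal (|D z| / n) + ENNReal.ofReal r :=
        ENNReal.ofReal_add_le.trans (add_le_add ENNReal.ofReal_add_le le_rfl)
    _ ≤ 2 * (supNorm D / n) + ENNReal.ofReal r := by
        rw [two_mul]
        gcongr <;> exact ofReal_abs_div_le_supNorm_div D _ n

lemma limsup_bowenVariation_le [MetricSpace X] {φ : X → X} {G : ℕ → X → ℝ} {V : X → ℝ} {δ r : ℝ}
    (hV : ∀ a b, dist a b < 2 * δ → |V a - V b| ≤ r) :
    limsup (bowenVariation φ G δ) atTop ≤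
      2 * limsup (fun n => supNorm (fun x => G n x - birkhoff φ V n x) / n) atTop +
        ENNReal.ofReal r :=
  calc limsup (bowenVariation φ G δ) atTop
      ≤ limsup (fun n => 2 * (supNorm (fun x => G n x - birkhoff φ V n x) / n) +
          ENNReal.ofReal r) atTop :=
        limsup_le_limsup (.of_forall (bowenVariation_le hV))
    _ = _ := by
        rw [limsup_add_const _ _ _ (by isBoundedDefault) (by isBoundedDefault),
          ENNReal.limsup_const_mul_of_ne_top ENNReal.ofNat_ne_top]

lemma eventually_limsup_bowenVariation_le [MetricSpace X] [CompactSpace X] (φ : X → X)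
    (G : ℕ → X → ℝ) {V : X → ℝ} (hV : Continuous V) {r : ℝ} (hr : 0 < r) :
    ∀ᶠ δ in 𝓝[>] 0, limsup (bowenVariation φ G δ) atTop ≤
      2 * limsup (fun n => supNorm (fun x => G n x - birkhoff φ V n x) / n) atTop +
        ENNReal.ofReal r := by
  obtain ⟨δ₀, hδ₀, hVδ₀⟩ :=
    Metric.uniformContinuous_iff.1 (CompactSpace.uniformContinuous_of_continuous hV) r hr
  filter_upwards [Ioo_mem_nhdsGT (half_pos hδ₀)] with δ hδ
  refine limsup_bowenVariation_le fun a b hab => (hVδ₀ ?_).le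
  linarith [hδ.2]

end TemperedVariation

lemma ENNReal.tendsto_nhds_zero_of_forall_eventually_le {α ι : Type*} {l : Filter α}
    {L : Filter ι} [L.NeBot] {f : α → ℝ≥0∞} {b : ι → ℝ≥0∞} (hb : Tendsto b L (𝓝 0))
    (hfb : ∀ k, ∀ᶠ t in l, f t ≤ b k) :
    Tendsto f l (𝓝 0) := by
  refine ENNReal.tendsto_nhds_zero.2 fun ε hε => ?_
  obtain ⟨k, hk⟩ := (hb.eventually (eventually_le_nhds hε)).exists
  exact (hfb k).mono fun t ht => ht.trans hk

theorem asympAdd_temperedVariation_general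
    {M : Type*} [MetricSpace M] [CompactSpace M] [MeasurableSpace M]
    (φ : M → M)
    (G : ℕ → M → ℝ) (hG : AsympAdd φ G) :
    Tendsto
      (fun δ : ℝ => Filter.limsup
        (fun n : ℕ =>
          ⨆ x : M, ⨆ y ∈ bowenBall φ n x δ, ⨆ z ∈ bowenBall φ n x δ,
            ENNReal.ofReal (|G n y - G n z| / n)) atTop)
      (𝓝[>] (0 : ℝ)) (nhds 0) := by
  obtain ⟨-, Gk, hGk_cont, hGk_approx⟩ := hG
  have hbound : Tendsto (fun k : ℕ =>
      2 * limsup (fun n => supNorm (fun x => G n x - birkhoff φ (Gk k) n x) / n) atTop +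
        ENNReal.ofReal (1 / (k + 1))) atTop (𝓝 0) := by
    simpa using (ENNReal.Tendsto.const_mul hGk_approx (.inr ENNReal.ofNat_ne_top)).add
      (ENNReal.tendsto_ofReal tendsto_one_div_add_atTop_nhds_zero_nat)
  exact ENNReal.tendsto_nhds_zero_of_forall_eventually_le hbound fun k =>
    eventually_limsup_bowenVariation_le φ G (hGk_cont k) Nat.one_div_pos_of_nat

/-- **Asymptotically additive sequences have tempered variation:**
`lim_{δ↓0} limsup_{n→∞} sup_{x ∈ M} sup_{y,z ∈ B_n(x,δ)} (1/n)|G_n(y) − G_n(z)| = 0`. -/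
theorem asympAdd_temperedVariation
    {M : Type*} [MetricSpace M] [CompactSpace M] [MeasurableSpace M] [BorelSpace M]
    (φ : M → M) (hφ : Continuous φ)
    (G : ℕ → M → ℝ) (hG : AsympAdd φ G) :
    Tendsto
      (fun δ : ℝ => Filter.limsup
        (fun n : ℕ =>
          ⨆ x : M, ⨆ y ∈ bowenBall φ n x δ, ⨆ z ∈ bowenBall φ n x δ,
            ENNReal.ofReal (|G n y - G n z| / n)) atTop)
      (𝓝[>] (0 : ℝ)) (nhds 0) :=
  asympAdd_temperedVariation_general φ G hG
end

section
/- Let M be a compact metric space, φ: M → M continuous, and θ: M → M a homeomorphism with θ∘θ = Id such that either φ = θ∘φ∘θ, or φ is a homeomorphism and φ^{−1} = θ∘φ∘θ. Set θ_n = θ in the first case and θ_n = θ∘φ^{n−1} in the second. If G = {G_n} is an asymptotically additive sequence with approximating sequence {G^(k)} ⊂ C(M), then the sequence G∘θ = {G_n∘θ_n} is asymptotically additive with approximating sequence {G^(k)∘θ}. -/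
open MeasureTheory Filter Topology Set
open scoped ENNReal

variable {M : Type*} [MetricSpace M] [CompactSpace M] [MeasurableSpace M] [BorelSpace M]

private lemma supNorm_comp_surj {M : Type*} [MetricSpace M] [CompactSpace M]
    [MeasurableSpace M] [BorelSpace M]
    (f : M → ℝ) (σ : M → M) (hσ : Function.Surjective σ) :
    supNorm (fun x => f (σ x)) = supNorm f :=
  hσ.iSup_comp fun y => ENNReal.ofReal |f y|

/-- **Asymptotic additivity is preserved by composition with the reversal.**
Let `θ` be a continuous involution of `M` which either commutes with `φ`
(`φ = θ∘φ∘θ`, with `θ_n = θ`) or reverses an invertible `φ` (`φ⁻¹ = θ∘φ∘θ`, with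
`θ_n = θ∘φ^{n-1}`).  If `{G_n}` is asymptotically additive with approximating sequence
`{G^{(k)}} ⊆ C(M)`, then `{G_n ∘ θ_n}` is asymptotically additive with approximating
sequence `{G^{(k)} ∘ θ}`. -/
theorem asympAdd_comp_reversal
    {M : Type*} [MetricSpace M] [CompactSpace M] [MeasurableSpace M] [BorelSpace M]
    (φ : M → M) (hφ : Continuous φ)
    (θ : M → M) (hθ : Continuous θ) (hθinv : θ ∘ θ = id)
    (θn : ℕ → M → M)
    (hcase :
      ((θ ∘ φ ∘ θ = φ) ∧ ∀ n, θn n = θ) ∨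
      ((∃ ψ : M → M, Continuous ψ ∧ φ ∘ ψ = id ∧ ψ ∘ φ = id ∧ θ ∘ φ ∘ θ = ψ) ∧
        ∀ n : ℕ, 0 < n → θn n = θ ∘ φ^[n - 1]))
    (G : ℕ → M → ℝ) (hGmeas : ∀ n, Measurable (G n))
    (hGbdd : ∀ n, ∃ C : ℝ, ∀ x, |G n x| ≤ C)
    (Gk : ℕ → M → ℝ) (hGk : ∀ k, Continuous (Gk k))
    (happrox : ApproxSeq φ G Gk) :
    (∀ k, Continuous (fun x => Gk k (θ x))) ∧
    ApproxSeq φ (fun n x => G n (θn n x)) (fun k x => Gk k (θ x)) := by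
  have hθid : ∀ x, θ (θ x) = x := fun x => congrFun hθinv x
  have hθsurj : Function.Surjective θ := fun y => ⟨θ y, hθid y⟩
  refine ⟨fun k => (hGk k).comp hθ, ?_⟩
  have key : ∀ k n, 1 ≤ n →
      supNorm (fun x => G n (θn n x) - birkhoff φ (fun x => Gk k (θ x)) n x)
        = supNorm (fun x => G n x - birkhoff φ (Gk k) n x) := by
    intro k n hn
    obtain ⟨hσ, hb⟩ : Function.Surjective (θn n) ∧
        ∀ x, birkhoff φ (fun x => Gk k (θ x)) n x = birkhoff φ (Gk k) n (θn n x) := by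
      rcases hcase with ⟨hc, hθn⟩ | ⟨⟨ψ, hψc, hφψ, hψφ, hc⟩, hθn⟩
      · have hcomm : ∀ x, θ (φ x) = φ (θ x) := by
          intro x
          have := congrFun hc (θ x)
          simpa [hθid x] using this
        have hiter : ∀ j x, θ (φ^[j] x) = φ^[j] (θ x) := by
          intro j
          induction j with
          | zero => intro x; simp
          | succ j ih =>
            intro x
            rw [Function.iterate_succ_apply', Function.iterate_succ_apply', hcomm, ih]
        refine ⟨by rw [hθn n]; exact hθsurj, fun x => ?_⟩
        rw [hθn n]
        unfold birkhoff
        exact Finset.sum_congr rfl fun j _ => congrArg (Gk k) (hiter j x)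
      · have hnpos : 0 < n := hn
        have hψφ' : Function.LeftInverse ψ φ := fun x => congrFun hψφ x
        have hφsurj : Function.Surjective φ := fun y => ⟨ψ y, congrFun hφψ y⟩
        have hsemi : ∀ x, φ (θ x) = θ (ψ x) := by
          intro x
          have h1 : θ (φ (θ x)) = ψ x := congrFun hc x
          have h2 := congrArg θ h1
          rwa [hθid] at h2
        have hiter : ∀ j x, φ^[j] (θ x) = θ (ψ^[j] x) := by
          intro j
          induction j with
          | zero => intro x; simp
          | succ j ih =>
            intro x
            rw [Function.iterate_succ_apply', ih, hsemi, Function.iterate_succ_apply' ψ j x]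
        have hcancel : ∀ j, j ≤ n - 1 → ∀ x, ψ^[j] (φ^[n - 1] x) = φ^[n - 1 - j] x := by
          intro j hj x
          have h3 : φ^[n - 1] x = φ^[j] (φ^[n - 1 - j] x) := by
            rw [← Function.iterate_add_apply, Nat.add_sub_cancel' hj]
          rw [h3, hψφ'.iterate j _]
        refine ⟨by rw [hθn n hnpos]; exact hθsurj.comp (hφsurj.iterate (n - 1)), fun x => ?_⟩
        rw [hθn n hnpos]
        unfold birkhoff
        rw [← Finset.sum_range_reflect (fun j => Gk k (θ (φ^[j] x))) n]
        refine Finset.sum_congr rfl fun j hj => ?_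
        rw [Function.comp_apply, hiter j (φ^[n - 1] x),
          hcancel j (by have := Finset.mem_range.mp hj; omega) x]
    calc supNorm (fun x => G n (θn n x) - birkhoff φ (fun x => Gk k (θ x)) n x)
        = supNorm (fun x => (fun y => G n y - birkhoff φ (Gk k) n y) (θn n x)) := by
          congr 1; funext x; rw [hb x]
      _ = supNorm (fun y => G n y - birkhoff φ (Gk k) n y) := supNorm_comp_surj (fun y => G n y - birkhoff φ (Gk k) n y) _ hσ
  unfold ApproxSeq at happrox ⊢
  have heq : (fun k => Filter.limsup
      (fun n => supNorm (fun x => G n (θn n x) -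
        birkhoff φ (fun x => Gk k (θ x)) n x) / (n : ℝ≥0∞)) atTop)
      = fun k => Filter.limsup
      (fun n => supNorm (fun x => G n x - birkhoff φ (Gk k) n x) / (n : ℝ≥0∞)) atTop := by
    funext k
    apply Filter.limsup_congr
    filter_upwards [Filter.eventually_ge_atTop 1] with n hn
    rw [key k n hn]
  exact heq ▸ happrox
end

section
/- Let M be a compact metric space, φ: M → M continuous, and θ: M → M a homeomorphism with θ∘θ = Id such that either φ = θ∘φ∘θ, or φ is a homeomorphism and φ^{−1} = θ∘φ∘θ. Then: (i) for every φ-invariant Borel probability measure Q, the measure Q̂ = Q∘θ is φ-invariant and h_φ(Q̂) = h_φ(Q); and (ii) for every asymptotically additive sequence G, p_φ(G∘θ) = p_φ(G), where G∘θ = {G_n∘θ_n} with θ_n = θ (commutation case) or θ_n = θ∘φ^{n−1} (reversal case). -/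
open MeasureTheory Filter Topology Set
open scoped ENNReal

variable {M : Type*} [MetricSpace M] [CompactSpace M] [MeasurableSpace M] [BorelSpace M]

section AuxProofs

variable {M : Type*} [MetricSpace M] [CompactSpace M] [MeasurableSpace M] [BorelSpace M]

/-- Reversal equivalence on tuples. -/
def revEquiv (n m : ℕ) : (Fin (n+1) → Fin m) ≃ (Fin (n+1) → Fin m) where
  toFun v := v ∘ Fin.rev
  invFun v := v ∘ Fin.rev
  left_inv v := by ext i; simp
  right_inv v := by ext i; simp

lemma mapEntropy_map {α : Type} [Fintype α] (Q : Measure M) (f : M → M)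
    (hf : Measurable f) (c : M → α) (hc : ∀ a : α, MeasurableSet (c ⁻¹' {a})) :
    mapEntropy (Q.map f) c = mapEntropy Q (c ∘ f) := by
  unfold mapEntropy
  refine Finset.sum_congr rfl fun a _ => ?_
  rw [Measure.map_apply hf (hc a)]
  rfl

lemma mapEntropy_equiv {α β : Type} [Fintype α] [Fintype β] (μ : Measure M)
    (e : α ≃ β) (c : M → α) :
    mapEntropy μ (fun x => e (c x)) = mapEntropy μ c := by
  unfold mapEntropy
  rw [← Equiv.sum_comp e (fun b => Real.negMulLog ((μ ((fun x => e (c x)) ⁻¹' {b})).toReal))]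
  refine Finset.sum_congr rfl fun a _ => ?_
  have hpre : (fun x => e (c x)) ⁻¹' {e a} = c ⁻¹' {a} := by
    ext x; simp [e.injective.eq_iff]
  rw [hpre]

lemma measurable_code {m : ℕ} (φ' : M → M) (hφ' : Measurable φ') (P : M → Fin m)
    (hP : Measurable P) (n : ℕ) (a : Fin (n+1) → Fin m) :
    MeasurableSet ((fun x => fun i : Fin (n+1) => P (φ'^[(i : ℕ)] x)) ⁻¹' {a}) := by
  have : ((fun x => fun i : Fin (n+1) => P (φ'^[(i : ℕ)] x)) ⁻¹' {a}) =
      ⋂ i : Fin (n+1), (fun x => P (φ'^[(i : ℕ)] x)) ⁻¹' {a i} := by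
    ext x
    simp [funext_iff]
  rw [this]
  exact MeasurableSet.iInter fun i =>
    (hP.comp (hφ'.iterate (i : ℕ))) (measurableSet_singleton (a i))

lemma partKS_theta (φ φ' θ : M → M) (hφ : Measurable φ) (hθ : Measurable θ)
    (Q : Measure M) {m : ℕ} (P : M → Fin m) (hP : Measurable P)
    (hconj : ∀ (i : ℕ) (x : M), φ^[i] (θ x) = θ (φ'^[i] x)) :
    partKS φ (Q.map θ) P = partKS φ' Q (P ∘ θ) := by
  unfold partKS
  refine iInf_congr fun n => ?_
  congr 1
  rw [mapEntropy_map Q θ hθ _ (measurable_code φ hφ P hP n)]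
  congr 1
  funext x
  funext i
  simp only [Function.comp_apply, hconj (i : ℕ) x]

lemma partKS_inv (φ ψ : M → M) (hφ : Measurable φ) (hψ : Measurable ψ)
    (Q : Measure M) (hQ : Q.map φ = Q) (hψφ : ∀ x, ψ (φ x) = x)
    {m : ℕ} (P : M → Fin m) (hP : Measurable P) :
    partKS ψ Q P = partKS φ Q P := by
  have hL : Function.LeftInverse ψ φ := hψφ
  have hQn : ∀ k : ℕ, Q.map (φ^[k]) = Q := by
    intro k
    induction k with
    | zero => simp [Measure.map_id]
    | succ k ih =>
      rw [Function.iterate_succ']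
      rw [← Measure.map_map hφ (hφ.iterate k), ih, hQ]
  unfold partKS
  refine iInf_congr fun n => ?_
  congr 1
  conv_lhs => rw [← hQn n]
  rw [mapEntropy_map Q (φ^[n]) (hφ.iterate n) _ (measurable_code ψ hψ P hP n)]
  have hcomp : (fun x => fun i : Fin (n+1) => P (ψ^[(i : ℕ)] x)) ∘ φ^[n] =
      fun x => (revEquiv n m) (fun i : Fin (n+1) => P (φ^[(i : ℕ)] x)) := by
    funext x
    funext i
    have hle : (i : ℕ) ≤ n := Fin.is_le i
    have h1 : φ^[n] x = φ^[(i : ℕ)] (φ^[n - (i : ℕ)] x) := by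
      rw [← Function.iterate_add_apply]
      congr 1
      omega
    have h2 : ψ^[(i : ℕ)] (φ^[n] x) = φ^[n - (i : ℕ)] x := by
      rw [h1, (hL.iterate (i : ℕ)) _]
    have h3 : ((Fin.rev i : Fin (n+1)) : ℕ) = n - (i : ℕ) := by
      rw [Fin.val_rev]
      omega
    simp only [Function.comp_apply, h2, revEquiv, Equiv.coe_fn_mk, h3]
  rw [hcomp, mapEntropy_equiv Q (revEquiv n m)]

lemma ksEntropy_theta (φ φ' θ : M → M) (hφ : Measurable φ) (hφ' : Measurable φ')
    (hθ : Measurable θ) (hθθ : ∀ x, θ (θ x) = x) (Q : Measure M)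
    (hconj : ∀ (i : ℕ) (x : M), φ^[i] (θ x) = θ (φ'^[i] x)) :
    ksEntropy φ (Q.map θ) = ksEntropy φ' Q := by
  unfold ksEntropy
  refine le_antisymm ?_ ?_
  · refine iSup_le fun m => iSup_le fun P => iSup_le fun hP => ?_
    rw [partKS_theta φ φ' θ hφ hθ Q P hP hconj]
    exact le_iSup_of_le m (le_iSup₂_of_le (P ∘ θ) (hP.comp hθ) le_rfl)
  · refine iSup_le fun m => iSup_le fun P => iSup_le fun hP => ?_
    have hPθ : P = (P ∘ θ) ∘ θ := by funext x; simp [Function.comp, hθθ x]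
    have : partKS φ' Q P = partKS φ (Q.map θ) (P ∘ θ) := by
      rw [partKS_theta φ φ' θ hφ hθ Q (P ∘ θ) (hP.comp hθ) hconj]
      conv_lhs => rw [hPθ]
    rw [this]
    exact le_iSup_of_le m (le_iSup₂_of_le (P ∘ θ) (hP.comp hθ) le_rfl)

lemma sepSum_mono_le (φ : M → M) (H H' : ℕ → M → ℝ) (δ ε' : ℝ) (hε' : 0 < ε') (n : ℕ)
    (s : M → M) (hH : ∀ x, H n x = H' n (s x))
    (hsep : ∀ x y, (∃ k < n, ¬ dist (φ^[k] x) (φ^[k] y) < δ) →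
      ∃ k < n, ¬ dist (φ^[k] (s x)) (φ^[k] (s y)) < ε') :
    sepSum φ H δ n ≤ sepSum φ H' ε' n := by
  classical
  refine iSup_le fun E => iSup_le fun hE => ?_
  have hne : ∀ x ∈ E, ∀ y ∈ E, x ≠ y → s x ≠ s y := by
    intro x hx y hy hxy
    have hnb : x ∉ bowenBall φ n y δ := hE x hx y hy hxy
    have hex : ∃ k < n, ¬ dist (φ^[k] x) (φ^[k] y) < δ := by
      by_contra hc
      push_neg at hc
      exact hnb fun k hk => hc k hk
    obtain ⟨k, hk, hd⟩ := hsep x y hex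
    intro hss
    exact hd (by rw [hss]; simpa using hε')
  have hsepE : IsSeparated φ n ε' (E.image s) := by
    intro x' hx' y' hy' hne'
    obtain ⟨x, hx, rfl⟩ := Finset.mem_image.mp hx'
    obtain ⟨y, hy, rfl⟩ := Finset.mem_image.mp hy'
    have hxy : x ≠ y := fun h => hne' (by rw [h])
    have hnb : x ∉ bowenBall φ n y δ := hE x hx y hy hxy
    have hex : ∃ k < n, ¬ dist (φ^[k] x) (φ^[k] y) < δ := by
      by_contra hc
      push_neg at hc
      exact hnb fun k hk => hc k hk
    obtain ⟨k, hk, hd⟩ := hsep x y hex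
    intro hball
    exact hd (hball k hk)
  have hsum : ∑ x ∈ E, ENNReal.ofReal (Real.exp (H n x)) =
      ∑ y ∈ E.image s, ENNReal.ofReal (Real.exp (H' n y)) := by
    rw [Finset.sum_image (fun x hx y hy hxy => by
      by_contra hc; exact hne x hx y hy hc hxy)]
    exact Finset.sum_congr rfl fun x _ => by rw [hH x]
  rw [hsum]
  exact le_iSup₂_of_le (E.image s) hsepE le_rfl

lemma pressure_le_of (φ : M → M) (H H' : ℕ → M → ℝ)
    (h : ∀ δ : ℝ, 0 < δ → ∃ ε' : ℝ, 0 < ε' ∧ ∀ n : ℕ, 0 < n → ∃ s : M → M,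
      (∀ x, H n x = H' n (s x)) ∧
      ∀ x y, (∃ k < n, ¬ dist (φ^[k] x) (φ^[k] y) < δ) →
        ∃ k < n, ¬ dist (φ^[k] (s x)) (φ^[k] (s y)) < ε') :
    pressure φ H ≤ pressure φ H' := by
  unfold pressure
  refine iSup₂_le fun δ hδ => ?_
  obtain ⟨ε', hε', hs⟩ := h δ hδ
  refine le_trans ?_ (le_iSup₂_of_le ε' hε' le_rfl)
  refine Filter.limsup_le_limsup ?_
  filter_upwards [Filter.eventually_gt_atTop 0] with n hn
  obtain ⟨s, hHs, hsep⟩ := hs n hn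
  have hle : sepSum φ H δ n ≤ sepSum φ H' ε' n :=
    sepSum_mono_le φ H H' δ ε' hε' n s hHs hsep
  exact mul_le_mul_of_nonneg_left (ENNReal.log_monotone hle)
    (EReal.coe_nonneg.mpr (inv_nonneg.mpr (Nat.cast_nonneg n)))

end AuxProofs

/-- **Invariance of entropy and pressure under the reversal.**
Let `θ` be a continuous involution of `M` which either commutes with `φ` (`φ = θ∘φ∘θ`,
`θ_n = θ`) or reverses an invertible `φ` (`φ⁻¹ = θ∘φ∘θ`, `θ_n = θ∘φ^{n-1}`).  Then:
(i) for every `φ`-invariant Borel probability measure `Q`, the measure `Q̂ = Q ∘ θ` is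
`φ`-invariant and `h_φ(Q̂) = h_φ(Q)`; (ii) for every asymptotically additive `G`,
`p_φ(G∘θ) = p_φ(G)` where `G∘θ = {G_n ∘ θ_n}`. -/
theorem entropy_pressure_reversal_invariant
    {M : Type*} [MetricSpace M] [CompactSpace M] [MeasurableSpace M] [BorelSpace M]
    (φ : M → M) (hφ : Continuous φ)
    (θ : M → M) (hθ : Continuous θ) (hθinv : θ ∘ θ = id)
    (θn : ℕ → M → M)
    (hcase :
      ((θ ∘ φ ∘ θ = φ) ∧ ∀ n, θn n = θ) ∨
      ((∃ ψ : M → M, Continuous ψ ∧ φ ∘ ψ = id ∧ ψ ∘ φ = id ∧ θ ∘ φ ∘ θ = ψ) ∧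
        ∀ n : ℕ, 0 < n → θn n = θ ∘ φ^[n - 1])) :
    (∀ Q : Measure M, IsProbabilityMeasure Q → Q.map φ = Q →
      (Q.map θ).map φ = Q.map θ ∧ ksEntropy φ (Q.map θ) = ksEntropy φ Q) ∧
    ∀ G : ℕ → M → ℝ, AsympAdd φ G →
      pressure φ (fun n x => G n (θn n x)) = pressure φ G := by
  have hφm : Measurable φ := hφ.measurable
  have hθm : Measurable θ := hθ.measurable
  have hθθ : ∀ x, θ (θ x) = x := fun x => congrFun hθinv x
  -- uniform continuity of θ, contrapositive form
  have hθuc : ∀ δ : ℝ, 0 < δ → ∃ ε' : ℝ, 0 < ε' ∧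
      ∀ a b : M, ¬ dist a b < δ → ¬ dist (θ a) (θ b) < ε' := by
    intro δ hδ
    obtain ⟨ε', hε', himp⟩ := Metric.uniformContinuous_iff.mp
      (CompactSpace.uniformContinuous_of_continuous hθ) δ hδ
    refine ⟨ε', hε', fun a b hab hc => hab ?_⟩
    have := himp hc
    rwa [hθθ, hθθ] at this
  rcases hcase with ⟨hcomm, hθn⟩ | ⟨⟨ψ, hψc, hφψ, hψφ, hψdef⟩, hθn⟩
  · -- Case 1: θ commutes with φ
    have hφθ : ∀ x, φ (θ x) = θ (φ x) := by
      intro x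
      have h1 : θ (φ (θ x)) = φ x := congrFun hcomm x
      calc φ (θ x) = θ (θ (φ (θ x))) := (hθθ _).symm
        _ = θ (φ x) := by rw [h1]
    have hsc : Function.Semiconj θ φ φ := fun x => (hφθ x).symm
    have hiter : ∀ (i : ℕ) (x : M), φ^[i] (θ x) = θ (φ^[i] x) :=
      fun i x => ((hsc.iterate_right i) x).symm
    constructor
    · intro Q _ hQ
      constructor
      · rw [Measure.map_map hφm hθm, show φ ∘ θ = θ ∘ φ from funext hφθ, ← Measure.map_map hθm hφm, hQ]
      · rw [ksEntropy_theta φ φ θ hφm hφm hθm hθθ Q hiter]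
    · intro G _
      refine le_antisymm ?_ ?_
      · refine pressure_le_of φ _ G (fun δ hδ => ?_)
        obtain ⟨ε', hε', hkey⟩ := hθuc δ hδ
        refine ⟨ε', hε', fun n hn => ⟨θ, fun x => by rw [hθn], ?_⟩⟩
        rintro x y ⟨k, hk, hd⟩
        refine ⟨k, hk, ?_⟩
        rw [hiter k x, hiter k y]
        exact hkey _ _ hd
      · refine pressure_le_of φ G _ (fun δ hδ => ?_)
        obtain ⟨ε', hε', hkey⟩ := hθuc δ hδ
        refine ⟨ε', hε', fun n hn => ⟨θ, fun x => by rw [hθn, hθθ], ?_⟩⟩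
        rintro x y ⟨k, hk, hd⟩
        refine ⟨k, hk, ?_⟩
        rw [hiter k x, hiter k y]
        exact hkey _ _ hd
  · -- Case 2: θ reverses φ
    have hψm : Measurable ψ := hψc.measurable
    have hψφ' : ∀ x, ψ (φ x) = x := fun x => congrFun hψφ x
    have hφψ' : ∀ x, φ (ψ x) = x := fun x => congrFun hφψ x
    have hψx : ∀ x, ψ x = θ (φ (θ x)) := fun x => (congrFun hψdef x).symm
    -- φ ∘ θ = θ ∘ ψ
    have hφθ : ∀ x, φ (θ x) = θ (ψ x) := by
      intro x
      rw [hψx x, hθθ]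
    -- semiconj: θ (ψ x) = φ (θ x)
    have hscψ : Function.Semiconj θ ψ φ := fun x => (hφθ x).symm
    have hiterψ : ∀ (i : ℕ) (x : M), φ^[i] (θ x) = θ (ψ^[i] x) :=
      fun i x => ((hscψ.iterate_right i) x).symm
    -- semiconj: θ (φ x) = ψ (θ x)
    have hscφ : Function.Semiconj θ φ ψ := by
      intro x
      rw [hψx (θ x), hθθ]
    have hiterφ : ∀ (i : ℕ) (x : M), ψ^[i] (θ x) = θ (φ^[i] x) :=
      fun i x => ((hscφ.iterate_right i) x).symm
    have hLψφ : Function.LeftInverse ψ φ := hψφ'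
    have hLφψ : Function.LeftInverse φ ψ := hφψ'
    -- ψ^[k] (φ^[m] x) = φ^[m-k] x for k ≤ m, and symmetrically
    have hcancel : ∀ (k m₀ : ℕ) (x : M), k ≤ m₀ → ψ^[k] (φ^[m₀] x) = φ^[m₀ - k] x := by
      intro k m₀ x hk
      have : φ^[m₀] x = φ^[k] (φ^[m₀ - k] x) := by
        rw [← Function.iterate_add_apply]; congr 1; omega
      rw [this, (hLψφ.iterate k) _]
    have hcancel' : ∀ (k m₀ : ℕ) (x : M), k ≤ m₀ → φ^[k] (ψ^[m₀] x) = ψ^[m₀ - k] x := by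
      intro k m₀ x hk
      have : ψ^[m₀] x = ψ^[k] (ψ^[m₀ - k] x) := by
        rw [← Function.iterate_add_apply]; congr 1; omega
      rw [this, (hLφψ.iterate k) _]
    constructor
    · intro Q _ hQ
      have hQψ : Q.map ψ = Q := by
        conv_lhs => rw [← hQ]
        rw [Measure.map_map hψm hφm, hψφ, Measure.map_id]
      constructor
      · rw [Measure.map_map hφm hθm, show φ ∘ θ = θ ∘ ψ from funext hφθ, ← Measure.map_map hθm hψm, hQψ]
      · rw [ksEntropy_theta φ ψ θ hφm hψm hθm hθθ Q hiterψ]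
        unfold ksEntropy
        exact iSup_congr fun m => iSup_congr fun P => iSup_congr fun hP =>
          by rw [partKS_inv φ ψ hφm hψm Q hQ hψφ' P hP]
    · intro G _
      refine le_antisymm ?_ ?_
      · refine pressure_le_of φ _ G (fun δ hδ => ?_)
        obtain ⟨ε', hε', hkey⟩ := hθuc δ hδ
        refine ⟨ε', hε', fun n hn => ⟨fun x => θ (φ^[n-1] x),
          fun x => by rw [hθn n hn]; rfl, ?_⟩⟩
        rintro x y ⟨k, hk, hd⟩
        refine ⟨n - 1 - k, by omega, ?_⟩
        have hid : ∀ z : M, φ^[n-1-k] (θ (φ^[n-1] z)) = θ (φ^[k] z) := by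
          intro z
          rw [hiterψ (n-1-k) (φ^[n-1] z), hcancel (n-1-k) (n-1) z (by omega)]
          congr 2
          omega
        rw [hid x, hid y]
        exact hkey _ _ hd
      · refine pressure_le_of φ G _ (fun δ hδ => ?_)
        obtain ⟨ε', hε', hkey⟩ := hθuc δ hδ
        refine ⟨ε', hε', fun n hn => ⟨fun x => ψ^[n-1] (θ x), ?_, ?_⟩⟩
        · intro x
          rw [hθn n hn]
          simp only [Function.comp_apply]
          rw [(hLφψ.iterate (n-1)) (θ x), hθθ]
        · rintro x y ⟨k, hk, hd⟩
          refine ⟨n - 1 - k, by omega, ?_⟩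
          have hid : ∀ z : M, φ^[n-1-k] (ψ^[n-1] (θ z)) = θ (φ^[k] z) := by
            intro z
            rw [hcancel' (n-1-k) (n-1) (θ z) (by omega)]
            have : n - 1 - (n - 1 - k) = k := by omega
            rw [this, hiterφ k z]
          rw [hid x, hid y]
          exact hkey _ _ hd
end

section
/- Let M be a compact metric space, φ: M → M continuous, and {G_n} a sequence of bounded Borel functions on M which is weakly almost additive: there is a sequence {C_m} ⊂ ℝ with C_n/n → 0 such that −C_m + G_m + G_n∘φ^m ≤ G_{m+n} ≤ C_m + G_m + G_n∘φ^m for all m, n ≥ 1. Then lim_{k→∞} limsup_{n→∞} (1/n) ‖G_n − (1/k) S_n G_k‖_∞ = 0, where S_nV = Σ_{j=0}^{n−1} V∘φ^j. -/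
open MeasureTheory Filter Topology Set
open scoped ENNReal

variable {M : Type*} [MetricSpace M] [CompactSpace M] [MeasurableSpace M] [BorelSpace M]

/-! Split `[0, n)` at an offset `j < k` into a prefix of length `j`, `l` blocks of length `k` and
a suffix of length at most `2k`. Weak almost additivity compares `G_n` with the sum of `G_k` over
the blocks up to an error `l C_k` plus terms bounded independently of `n`. Averaged over the `k`
offsets, the block sums add up to `S_{kl} G_k`, which differs from `S_n G_k` by at most `2k` bounded
terms. Hence `‖G_n - k⁻¹ S_n G_k‖_∞ ≤ B_k + n |C_k| / k`, and `|C_k| / k → 0`. -/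

open Finset Function

section BirkhoffSum

variable {X : Type*} (f : X → X)

theorem birkhoffSum_mul_eq_sum {A : Type*} [AddCommMonoid A] (g : X → A) (k l : ℕ) (x : X) :
    birkhoffSum f g (k * l) x = ∑ j ∈ range k, birkhoffSum f^[k] g l (f^[j] x) := by
  induction l with
  | zero => simp [birkhoffSum_zero]
  | succ l ih =>
    rw [Nat.mul_succ, birkhoffSum_add, ih]
    simp only [birkhoffSum_succ, sum_add_distrib]
    simp only [birkhoffSum, ← iterate_mul, ← iterate_add_apply, add_comm]

theorem abs_birkhoffSum_le {g : X → ℝ} {B : ℝ} (hg : ∀ x, |g x| ≤ B) (n : ℕ) (x : X) :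
    |birkhoffSum f g n x| ≤ n * B := by
  refine (abs_sum_le_sum_abs _ _).trans ?_
  simpa using sum_le_card_nsmul (range n) _ B fun j _ => hg (f^[j] x)

end BirkhoffSum

theorem supNorm_le_ofReal {X : Type*} {g : X → ℝ} {b : ℝ} (h : ∀ x, |g x| ≤ b) :
    supNorm g ≤ ENNReal.ofReal b :=
  iSup_le fun x => ENNReal.ofReal_le_ofReal (h x)

theorem limsup_div_natCast_le_ofReal {u : ℕ → ℝ≥0∞} {B a : ℝ}
    (h : ∀ᶠ n : ℕ in atTop, u n ≤ ENNReal.ofReal (B + n * a)) :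
    limsup (fun n : ℕ => u n / n) atTop ≤ ENNReal.ofReal a := by
  have hlim : Tendsto (fun n : ℕ => ENNReal.ofReal B / n + ENNReal.ofReal a) atTop
      (𝓝 (ENNReal.ofReal a)) := by
    simpa using (ENNReal.Tendsto.const_div ENNReal.tendsto_nat_nhds_top
      (Or.inr ENNReal.ofReal_ne_top)).add_const (ENNReal.ofReal a)
  refine (limsup_le_limsup ?_).trans hlim.limsup_eq.le
  filter_upwards [h, eventually_ge_atTop 1] with n hn hn1
  have hn0 : (n : ℝ≥0∞) ≠ 0 := by simp; omega
  calc u n / n ≤ ENNReal.ofReal (B + n * a) / n := by gcongr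
    _ ≤ (ENNReal.ofReal B + n * ENNReal.ofReal a) / n := by
      gcongr
      refine ENNReal.ofReal_add_le.trans_eq ?_
      rw [ENNReal.ofReal_mul n.cast_nonneg, ENNReal.ofReal_natCast]
    _ = ENNReal.ofReal B / n + ENNReal.ofReal a := by
      rw [ENNReal.add_div, mul_comm, ENNReal.mul_div_cancel_right hn0 (ENNReal.natCast_ne_top n)]

theorem Nat.exists_mul_add_le_lt {k n : ℕ} (hk : 0 < k) (hn : k ≤ n) :
    ∃ l, k * l + k ≤ n ∧ n < k * l + 2 * k := by
  obtain ⟨q, hq⟩ : ∃ q, n / k = q + 1 := Nat.exists_eq_add_one.mpr (Nat.div_pos hn hk)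
  have h := Nat.div_add_mod n k
  have hr := Nat.mod_lt n hk
  rw [hq, Nat.mul_succ] at h
  exact ⟨q, by omega, by omega⟩

def WeaklyAlmostAdditive {X : Type*} (f : X → X) (G : ℕ → X → ℝ) (c : ℕ → ℝ) : Prop :=
  ∀ m n, 1 ≤ m → 1 ≤ n → ∀ x, |G (m + n) x - G m x - G n (f^[m] x)| ≤ c m

namespace WeaklyAlmostAdditive

variable {X : Type*} {f : X → X} {G : ℕ → X → ℝ} {c : ℕ → ℝ}

theorem abs_sub_blocks_le (hG : WeaklyAlmostAdditive f G c) {k s : ℕ} (hk : 1 ≤ k) (hs : 1 ≤ s)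
    (l : ℕ) (x : X) :
    |G (k * l + s) x - birkhoffSum f^[k] (G k) l x - G s (f^[k * l] x)| ≤ l * c k := by
  induction l generalizing x with
  | zero => simp
  | succ l ih =>
    have hfirst := abs_le.mp (hG k (k * l + s) hk (by omega) x)
    have hrest := abs_le.mp (ih (f^[k] x))
    rw [show k * (l + 1) + s = k + (k * l + s) by ring, birkhoffSum_succ',
      mul_add_one, iterate_add_apply, abs_le]
    push_cast
    constructor <;> linarith

theorem abs_sub_shift_le (hG : WeaklyAlmostAdditive f G c) {j m : ℕ} (hcj : 0 ≤ c j)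
    (hm : 1 ≤ m) (x : X) : |G (j + m) x - G m (f^[j] x)| ≤ c j + |G j x| := by
  rcases Nat.eq_zero_or_pos j with rfl | hj1
  · simpa using add_nonneg hcj (abs_nonneg (G 0 x))
  · have hsplit := abs_le.mp (hG j m hj1 hm x)
    have := le_abs_self (G j x)
    have := neg_abs_le (G j x)
    rw [abs_le]
    constructor <;> linarith

theorem abs_sub_shifted_blocks_le (hG : WeaklyAlmostAdditive f G c) {j k s : ℕ} (hcj : 0 ≤ c j)
    (hk : 1 ≤ k) (hs : 1 ≤ s) (l : ℕ) (x : X) :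
    |G (j + (k * l + s)) x - birkhoffSum f^[k] (G k) l (f^[j] x)|
      ≤ c j + |G j x| + l * c k + |G s (f^[k * l] (f^[j] x))| := by
  have hshift := abs_le.mp (hG.abs_sub_shift_le hcj (by omega : 1 ≤ k * l + s) x)
  have hblocks := abs_le.mp (hG.abs_sub_blocks_le hk hs l (f^[j] x))
  have := le_abs_self (G s (f^[k * l] (f^[j] x)))
  have := neg_abs_le (G s (f^[k * l] (f^[j] x)))
  rw [abs_le]
  constructor <;> linarith

theorem abs_mul_sub_birkhoffSum_le (hG : WeaklyAlmostAdditive f G c) (hc : ∀ m, 0 ≤ c m)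
    {k : ℕ} (hk : 1 ≤ k) {B B' : ℝ} (hB : ∀ m ≤ 2 * k, ∀ x, |G m x| ≤ B) (hB' : ∀ j < k, c j ≤ B')
    {n : ℕ} (hn : k ≤ n) (x : X) :
    |k * G n x - birkhoffSum f (G k) n x| ≤ k * (B' + 5 * B) + n * c k := by
  obtain ⟨l, hln, hnl⟩ := Nat.exists_mul_add_le_lt hk hn
  have hB0 : 0 ≤ B := (abs_nonneg _).trans (hB 0 (Nat.zero_le _) x)
  have hoffset : ∀ j ∈ range k,
      |G n x - birkhoffSum f^[k] (G k) l (f^[j] x)| ≤ B' + 3 * B + l * c k := by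
    intro j hj
    have hjk := mem_range.mp hj
    obtain ⟨s, rfl⟩ : ∃ s, n = j + (k * l + s) := ⟨n - j - k * l, by omega⟩
    have := hG.abs_sub_shifted_blocks_le (hc j) hk (by omega : 1 ≤ s) l x
    have := hB j (by omega) x
    have := hB s (by omega) (f^[k * l] (f^[j] x))
    have := hB' j hjk
    linarith
  have hhead : |k * G n x - birkhoffSum f (G k) (k * l) x| ≤ k * (B' + 3 * B + l * c k) := by
    have hsum : k * G n x - birkhoffSum f (G k) (k * l) x
        = ∑ j ∈ range k, (G n x - birkhoffSum f^[k] (G k) l (f^[j] x)) := by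
      rw [birkhoffSum_mul_eq_sum, sum_sub_distrib, sum_const, card_range, nsmul_eq_mul]
    rw [hsum]
    refine (abs_sum_le_sum_abs _ _).trans ?_
    simpa only [card_range, nsmul_eq_mul] using sum_le_card_nsmul _ _ _ hoffset
  have htail : |birkhoffSum f (G k) (k * l) x - birkhoffSum f (G k) n x| ≤ 2 * k * B := by
    obtain ⟨d, rfl⟩ : ∃ d, n = k * l + d := ⟨n - k * l, by omega⟩
    rw [abs_sub_comm, birkhoffSum_add, add_sub_cancel_left]
    refine (abs_birkhoffSum_le f (hB k (by omega)) d _).trans ?_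
    gcongr
    exact_mod_cast (by omega : d ≤ 2 * k)
  have hlk : (k * l : ℝ) * c k ≤ n * c k := by
    gcongr
    · exact hc k
    · exact_mod_cast (by omega : k * l ≤ n)
  calc |k * G n x - birkhoffSum f (G k) n x|
      ≤ |k * G n x - birkhoffSum f (G k) (k * l) x|
        + |birkhoffSum f (G k) (k * l) x - birkhoffSum f (G k) n x| := abs_sub_le _ _ _
    _ ≤ k * (B' + 5 * B) + n * c k := by linarith

theorem abs_sub_inv_mul_birkhoffSum_le (hG : WeaklyAlmostAdditive f G c) (hc : ∀ m, 0 ≤ c m)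
    {k : ℕ} (hk : 1 ≤ k) {B B' : ℝ} (hB : ∀ m ≤ 2 * k, ∀ x, |G m x| ≤ B) (hB' : ∀ j < k, c j ≤ B')
    {n : ℕ} (hn : k ≤ n) (x : X) :
    |G n x - (k : ℝ)⁻¹ * birkhoffSum f (G k) n x| ≤ (B' + 5 * B) + n * (c k / k) := by
  have hk0 : (0 : ℝ) < k := by exact_mod_cast hk
  rw [← mul_le_mul_iff_of_pos_left hk0, ← abs_of_pos hk0, ← abs_mul, abs_of_pos hk0, mul_sub,
    mul_inv_cancel_left₀ hk0.ne']
  calc _ ≤ k * (B' + 5 * B) + n * c k := hG.abs_mul_sub_birkhoffSum_le hc hk hB hB' hn x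
    _ = k * ((B' + 5 * B) + n * (c k / k)) := by field_simp

end WeaklyAlmostAdditive

theorem weaklyAlmostAdditive_approx_general
    {M : Type*}
    (φ : M → M)
    (G : ℕ → M → ℝ)
    (hGbdd : ∀ n, ∃ C : ℝ, ∀ x, |G n x| ≤ C)
    (C : ℕ → ℝ) (hC : Tendsto (fun n : ℕ => C n / n) atTop (nhds 0))
    (hWAA : ∀ m n : ℕ, 1 ≤ m → 1 ≤ n → ∀ x : M,
      -C m + G m x + G n (φ^[m] x) ≤ G (m + n) x ∧
      G (m + n) x ≤ C m + G m x + G n (φ^[m] x)) :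
    Tendsto
      (fun k : ℕ => Filter.limsup
        (fun n : ℕ =>
          supNorm (fun x => G n x - (k : ℝ)⁻¹ * birkhoff φ (G k) n x) / (n : ℝ≥0∞)) atTop)
      atTop (nhds 0) := by
  -- `0 ≤ C m` only follows from `hWAA` when `M` is nonempty.
  have hG : WeaklyAlmostAdditive φ G fun m => |C m| := fun m n hm hn x => by
    have := hWAA m n hm hn x
    have := le_abs_self (C m)
    rw [abs_le]
    constructor <;> linarith
  choose D hD using hGbdd
  have hlimsup : ∀ k : ℕ, 1 ≤ k → limsup (fun n : ℕ =>
      supNorm (fun x => G n x - (k : ℝ)⁻¹ * birkhoff φ (G k) n x) / (n : ℝ≥0∞)) atTop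
        ≤ ENNReal.ofReal (|C k| / k) := by
    intro k hk
    obtain ⟨B, hB⟩ := ((Set.finite_Iic (2 * k)).image D).bddAbove
    obtain ⟨B', hB'⟩ := ((Set.finite_Iio k).image fun j => |C j|).bddAbove
    refine limsup_div_natCast_le_ofReal (B := B' + 5 * B) ?_
    filter_upwards [eventually_ge_atTop k] with n hn
    exact supNorm_le_ofReal fun x => hG.abs_sub_inv_mul_birkhoffSum_le (fun m => abs_nonneg (C m))
      hk (fun m hm y => (hD m y).trans (hB ⟨m, hm, rfl⟩)) (fun j hj => hB' ⟨j, hj, rfl⟩) hn x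
  have hbound : Tendsto (fun k : ℕ => ENNReal.ofReal (|C k| / k)) atTop (𝓝 0) := by
    simpa [abs_div] using ENNReal.tendsto_ofReal hC.abs
  exact tendsto_of_tendsto_of_tendsto_of_le_of_le' tendsto_const_nhds hbound
    (Eventually.of_forall fun _ => zero_le) ((eventually_ge_atTop 1).mono hlimsup)

/-- **Weakly almost additive sequences are approximated by Birkhoff sums of their own
normalized terms (Lemma 6.2):** if `{G_n}` is weakly almost additive, then
`lim_{k→∞} limsup_{n→∞} (1/n) ‖G_n − (1/k) S_n G_k‖_∞ = 0`. -/
theorem weaklyAlmostAdditive_approx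
    {M : Type*} [MetricSpace M] [CompactSpace M] [MeasurableSpace M] [BorelSpace M]
    (φ : M → M) (hφ : Continuous φ)
    (G : ℕ → M → ℝ) (hGmeas : ∀ n, Measurable (G n))
    (hGbdd : ∀ n, ∃ C : ℝ, ∀ x, |G n x| ≤ C)
    (C : ℕ → ℝ) (hC : Tendsto (fun n : ℕ => C n / n) atTop (nhds 0))
    (hWAA : ∀ m n : ℕ, 1 ≤ m → 1 ≤ n → ∀ x : M,
      -C m + G m x + G n (φ^[m] x) ≤ G (m + n) x ∧
      G (m + n) x ≤ C m + G m x + G n (φ^[m] x)) :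
    Tendsto
      (fun k : ℕ => Filter.limsup
        (fun n : ℕ =>
          supNorm (fun x => G n x - (k : ℝ)⁻¹ * birkhoff φ (G k) n x) / (n : ℝ≥0∞)) atTop)
      atTop (nhds 0) :=
  weaklyAlmostAdditive_approx_general φ G hGbdd C hC hWAA
end

section
/- Let M be a compact metric space, φ: M → M continuous, and {G_n} a sequence of bounded Borel functions on M. Suppose there is a sequence {G^(k)} of bounded Borel functions such that lim_{k→∞} limsup_{n→∞} (1/n)‖G_n − S_n G^(k)‖_∞ = 0. Then lim_{k→∞} limsup_{n→∞} (1/n)‖G_n − (1/k) S_n G_k‖_∞ = 0. -/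
open MeasureTheory Filter Topology Set
open scoped ENNReal

variable {M : Type*} [MetricSpace M] [CompactSpace M] [MeasurableSpace M] [BorelSpace M]

lemma birkhoff_add' {M : Type*} (φ : M → M) (V : M → ℝ) (m n : ℕ) (x : M) :
    birkhoff φ V (m + n) x = birkhoff φ V m x + birkhoff φ V n (φ^[m] x) := by
  unfold birkhoff
  rw [Finset.sum_range_add]
  congr 1
  refine Finset.sum_congr rfl fun j _ => ?_
  rw [add_comm m j, ← Function.iterate_add_apply]

lemma abs_birkhoff_le' {M : Type*} (φ : M → M) (V : M → ℝ) {C : ℝ} (hC : ∀ y, |V y| ≤ C)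
    (n : ℕ) (x : M) : |birkhoff φ V n x| ≤ n * C := by
  calc |birkhoff φ V n x| ≤ ∑ j ∈ Finset.range n, |V (φ^[j] x)| :=
        Finset.abs_sum_le_sum_abs _ _
    _ ≤ ∑ j ∈ Finset.range n, C := Finset.sum_le_sum fun j _ => hC _
    _ = n * C := by rw [Finset.sum_const, Finset.card_range, nsmul_eq_mul]

lemma birkhoff_swap' {M : Type*} (φ : M → M) (V : M → ℝ) (k n : ℕ) (x : M) :
    birkhoff φ (birkhoff φ V k) n x = ∑ l ∈ Finset.range k, birkhoff φ V n (φ^[l] x) := by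
  unfold birkhoff
  simp only [← Function.iterate_add_apply]
  rw [Finset.sum_comm]
  exact Finset.sum_congr rfl fun l _ => Finset.sum_congr rfl fun i _ => by rw [add_comm]

lemma key_pointwise' {M : Type*} (φ : M → M) (V W : M → ℝ) {CV : ℝ}
    (hCV : ∀ y, |V y| ≤ CV) {k : ℕ} (hk : 0 < k) {η : ℝ}
    (hW : ∀ y, |W y - birkhoff φ V k y| ≤ k * η) (n : ℕ) (x : M) (g : ℝ) :
    |g - (k : ℝ)⁻¹ * birkhoff φ W n x|
      ≤ |g - birkhoff φ V n x| + (n * η + 2 * k * CV) := by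
  have hCV0 : 0 ≤ CV := (abs_nonneg _).trans (hCV x)
  have hk0 : (k : ℝ) ≠ 0 := Nat.cast_ne_zero.mpr hk.ne'
  -- term bounds
  have hterm : ∀ l ∈ Finset.range k,
      |birkhoff φ V n x - birkhoff φ V n (φ^[l] x)| ≤ 2 * k * CV := by
    intro l hl
    have hlk : (l : ℝ) ≤ k := Nat.cast_le.mpr (Finset.mem_range.mp hl).le
    have h1 : birkhoff φ V n x - birkhoff φ V n (φ^[l] x)
        = birkhoff φ V l x - birkhoff φ V l (φ^[n] x) := by
      have e1 := birkhoff_add' φ V l n x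
      have e2 := birkhoff_add' φ V n l x
      rw [add_comm l n, e2] at e1
      linarith
    rw [h1]
    have b1 := abs_birkhoff_le' φ V hCV l x
    have b2 := abs_birkhoff_le' φ V hCV l (φ^[n] x)
    have := abs_sub (birkhoff φ V l x) (birkhoff φ V l (φ^[n] x))
    nlinarith [abs_sub_abs_le_abs_sub (birkhoff φ V l x) (birkhoff φ V l (φ^[n] x)),
      abs_sub (birkhoff φ V l x) (birkhoff φ V l (φ^[n] x))]
  -- A bound
  have hA : |∑ l ∈ Finset.range k, (birkhoff φ V n x - birkhoff φ V n (φ^[l] x))|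
      ≤ k * (2 * k * CV) := by
    calc |∑ l ∈ Finset.range k, (birkhoff φ V n x - birkhoff φ V n (φ^[l] x))|
        ≤ ∑ l ∈ Finset.range k, |birkhoff φ V n x - birkhoff φ V n (φ^[l] x)| :=
          Finset.abs_sum_le_sum_abs _ _
      _ ≤ ∑ _l ∈ Finset.range k, (2 * k * CV) := Finset.sum_le_sum hterm
      _ = k * (2 * k * CV) := by rw [Finset.sum_const, Finset.card_range, nsmul_eq_mul]
  -- B bound
  have hB : |birkhoff φ W n x - birkhoff φ (birkhoff φ V k) n x| ≤ n * (k * η) := by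
    have : birkhoff φ W n x - birkhoff φ (birkhoff φ V k) n x
        = birkhoff φ (fun y => W y - birkhoff φ V k y) n x := by
      unfold birkhoff; rw [← Finset.sum_sub_distrib]
    rw [this]
    exact abs_birkhoff_le' φ _ hW n x
  -- combine
  have hAB : (k : ℝ) * birkhoff φ V n x - birkhoff φ W n x
      = (∑ l ∈ Finset.range k, (birkhoff φ V n x - birkhoff φ V n (φ^[l] x)))
        - (birkhoff φ W n x - birkhoff φ (birkhoff φ V k) n x) := by
    rw [Finset.sum_sub_distrib, Finset.sum_const, Finset.card_range, nsmul_eq_mul,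
      birkhoff_swap']
    ring
  have hmid : |birkhoff φ V n x - (k : ℝ)⁻¹ * birkhoff φ W n x| ≤ n * η + 2 * k * CV := by
    have heq : birkhoff φ V n x - (k : ℝ)⁻¹ * birkhoff φ W n x
        = (k : ℝ)⁻¹ * ((k : ℝ) * birkhoff φ V n x - birkhoff φ W n x) := by
      field_simp
    rw [heq, abs_mul, abs_inv, abs_of_nonneg (Nat.cast_nonneg (α := ℝ) k)]
    have habs : |(k : ℝ) * birkhoff φ V n x - birkhoff φ W n x|
        ≤ k * (2 * k * CV) + n * (k * η) := by
      rw [hAB]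
      exact (abs_sub _ _).trans (by linarith)
    have hkpos : (0:ℝ) < k := by positivity
    calc (k : ℝ)⁻¹ * |(k : ℝ) * birkhoff φ V n x - birkhoff φ W n x|
        ≤ (k : ℝ)⁻¹ * (k * (2 * k * CV) + n * (k * η)) := by
          exact mul_le_mul_of_nonneg_left habs (by positivity)
      _ = n * η + 2 * k * CV := by field_simp; ring
  calc |g - (k : ℝ)⁻¹ * birkhoff φ W n x|
      ≤ |g - birkhoff φ V n x| + |birkhoff φ V n x - (k : ℝ)⁻¹ * birkhoff φ W n x| :=
        abs_sub_le _ _ _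
    _ ≤ |g - birkhoff φ V n x| + (n * η + 2 * k * CV) := by linarith


lemma supNorm_le_of_forall' {M : Type*} {f : M → ℝ} {D : ℝ} (h : ∀ x, |f x| ≤ D) :
    supNorm f ≤ ENNReal.ofReal D :=
  iSup_le fun x => ENNReal.ofReal_le_ofReal (h x)

lemma forall_of_supNorm_le' {M : Type*} {f : M → ℝ} {D : ℝ} (hD : 0 ≤ D)
    (h : supNorm f ≤ ENNReal.ofReal D) : ∀ x, |f x| ≤ D := fun x =>
  (ENNReal.ofReal_le_ofReal_iff hD).mp
    ((le_iSup (fun x => ENNReal.ofReal |f x|) x).trans h)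


/-- **Self-approximation of asymptotically additive sequences (Lemma 6.3):**
if `{G_n}` admits a sequence of bounded Borel functions `{G^{(k)}}` with
`lim_{k→∞} limsup_{n→∞} (1/n) ‖G_n − S_n G^{(k)}‖_∞ = 0`, then
`lim_{k→∞} limsup_{n→∞} (1/n) ‖G_n − (1/k) S_n G_k‖_∞ = 0`. -/
theorem self_approximation_of_approx
    {M : Type*} [MetricSpace M] [CompactSpace M] [MeasurableSpace M] [BorelSpace M]
    (φ : M → M) (hφ : Continuous φ)
    (G : ℕ → M → ℝ) (hGmeas : ∀ n, Measurable (G n))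
    (hGbdd : ∀ n, ∃ C : ℝ, ∀ x, |G n x| ≤ C)
    (Gk : ℕ → M → ℝ) (hGkmeas : ∀ k, Measurable (Gk k))
    (hGkbdd : ∀ k, ∃ C : ℝ, ∀ x, |Gk k x| ≤ C)
    (happrox : ApproxSeq φ G Gk) :
    Tendsto
      (fun k : ℕ => Filter.limsup
        (fun n : ℕ =>
          supNorm (fun x => G n x - (k : ℝ)⁻¹ * birkhoff φ (G k) n x) / (n : ℝ≥0∞)) atTop)
      atTop (nhds 0) := by
  rw [ENNReal.tendsto_nhds_zero]
  intro ε hε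
  obtain ⟨ε', hε'pos, hε'le⟩ : ∃ ε' : ℝ, 0 < ε' ∧ ENNReal.ofReal (3 * ε') ≤ ε := by
    rcases eq_or_ne ε ⊤ with h | h
    · exact ⟨1, one_pos, h ▸ le_top⟩
    · refine ⟨ε.toReal / 3, by
        have := ENNReal.toReal_pos hε.ne' h
        positivity, ?_⟩
      rw [mul_div_cancel₀ _ (by norm_num : (3:ℝ) ≠ 0), ENNReal.ofReal_toReal h]
  rw [ApproxSeq, ENNReal.tendsto_nhds_zero] at happrox
  have hj := (happrox (ENNReal.ofReal (ε' / 2))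
    (ENNReal.ofReal_pos.mpr (by positivity))).exists
  obtain ⟨j, hj⟩ := hj
  set V := Gk j with hV
  obtain ⟨C0, hC0⟩ := hGkbdd j
  set CV := max C0 0 with hCVdef
  have hCVle : ∀ y, |V y| ≤ CV := fun y => (hC0 y).trans (le_max_left _ _)
  have hCV0 : 0 ≤ CV := le_max_right _ _
  -- eventual bound in n
  have hev : ∀ᶠ n : ℕ in atTop,
      supNorm (fun x => G n x - birkhoff φ V n x) / (n : ℝ≥0∞) ≤ ENNReal.ofReal ε' := by
    have hlt : Filter.limsup
        (fun n => supNorm (fun x => G n x - birkhoff φ V n x) / (n : ℝ≥0∞)) atTop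
        < ENNReal.ofReal ε' :=
      lt_of_le_of_lt hj ((ENNReal.ofReal_lt_ofReal_iff hε'pos).mpr (half_lt_self hε'pos))
    exact (Filter.eventually_lt_of_limsup_lt hlt).mono fun n hn => hn.le
  have hev2 : ∀ᶠ n : ℕ in atTop, ∀ x, |G n x - birkhoff φ V n x| ≤ n * ε' := by
    filter_upwards [hev, eventually_ge_atTop 1] with n hn hn1 x
    have hn0 : (n : ℝ≥0∞) ≠ 0 := Nat.cast_ne_zero.mpr (by omega)
    have h1 : supNorm (fun x => G n x - birkhoff φ V n x)
        ≤ ENNReal.ofReal (n * ε') := by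
      rw [ENNReal.ofReal_mul (by positivity), ENNReal.ofReal_natCast]
      exact (ENNReal.div_le_iff hn0 (ENNReal.natCast_ne_top n)).mp
        (hn.trans_eq rfl) |>.trans_eq (mul_comm _ _)
    exact forall_of_supNorm_le' (by positivity) h1 x
  -- eventually in k
  filter_upwards [hev2, eventually_ge_atTop 1] with k hWk hk1
  refine le_trans ?_ hε'le
  have hkpos : 0 < k := by omega
  -- eventual bound in n for fixed k
  have hbig : ∀ᶠ n : ℕ in atTop, 2 * (k : ℝ) * CV ≤ n * ε' := by
    have : Tendsto (fun n : ℕ => (n : ℝ) * ε') atTop atTop :=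
      (tendsto_natCast_atTop_atTop).atTop_mul_const hε'pos
    exact this.eventually_ge_atTop _
  apply Filter.limsup_le_of_le (by isBoundedDefault)
  filter_upwards [hev2, eventually_ge_atTop 1, hbig] with n hn hn1 hnbig
  have hpt : ∀ x, |G n x - (k : ℝ)⁻¹ * birkhoff φ (G k) n x| ≤ 3 * ε' * n := by
    intro x
    have hkey := key_pointwise' φ V (G k) hCVle hkpos hWk n x (G n x)
    have h2 := hn x
    linarith
  have hsn : supNorm (fun x => G n x - (k : ℝ)⁻¹ * birkhoff φ (G k) n x)
      ≤ ENNReal.ofReal (3 * ε') * (n : ℝ≥0∞) := by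
    refine le_trans (supNorm_le_of_forall' hpt) ?_
    rw [← ENNReal.ofReal_natCast n, ← ENNReal.ofReal_mul (by positivity)]
  exact ENNReal.div_le_of_le_mul hsn
end
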